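/- arXiv:2407.16068 — 8 statements merged into one kernel-verified Lean document; each statement's English description precedes it below -/
import Mathlib

section
/- For every k ≥ 1, every even ℓ with 2k ≤ ℓ < 4k, and every x with 0 < x ≤ 1, the sign of E_k^{(ℓ)}(x) is (−1)^{(ℓ−2k)/2 + 1}; that is, (−1)^{(ℓ−2k)/2} · E_k^{(ℓ)}(x) < 0. Equivalently, for every m with 1 ≤ m ≤ k, (−1)^m · ∑_{j=m}^{k} (k choose j) · (3/2)^{k−j} · (−1/2)^{j} · x^{2k+2j} > 0. -/
open Polynomial

/-- Tail of the binomial sum `∑_{j=m}^k C(k,j) a^{k-j} u^j`. -/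
noncomputable def S (a u : ℝ) (k m : ℕ) : ℝ :=
  ∑ j ∈ Finset.Icc m k, (k.choose j : ℝ) * a ^ (k - j) * u ^ j

lemma S_zero (a u : ℝ) (k : ℕ) : S a u k 0 = (u + a) ^ k := by
  rw [S, show Finset.Icc 0 k = Finset.range (k+1) by ext i; simp [Nat.lt_succ_iff], add_pow]
  exact Finset.sum_congr rfl fun j hj => by ring

lemma S_rec (a u : ℝ) (k m : ℕ) :
    S a u (k+1) (m+1) = a * S a u k (m+1) + u * S a u k m := by
  have hmap : Finset.Icc (m+1) (k+1) = (Finset.Icc m k).map (addRightEmbedding 1) := by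
    rw [Finset.map_add_right_Icc]
  rw [S, hmap, Finset.sum_map]
  simp only [addRightEmbedding_apply]
  have hterm : ∀ i ∈ Finset.Icc m k,
      ((k+1).choose (i+1) : ℝ) * a ^ (k + 1 - (i+1)) * u ^ (i+1)
      = (k.choose i : ℝ) * a ^ (k - i) * u ^ (i+1)
        + (k.choose (i+1) : ℝ) * a ^ (k - i) * u ^ (i+1) := by
    intro i hi
    rw [Nat.choose_succ_succ, Nat.succ_sub_succ]
    push_cast
    ring
  rw [Finset.sum_congr rfl hterm, Finset.sum_add_distrib]
  have h1 : ∑ i ∈ Finset.Icc m k, (k.choose i : ℝ) * a ^ (k - i) * u ^ (i+1)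
      = u * S a u k m := by
    rw [S, Finset.mul_sum]
    exact Finset.sum_congr rfl fun i hi => by rw [pow_succ]; ring
  have h2 : ∑ i ∈ Finset.Icc m k, (k.choose (i+1) : ℝ) * a ^ (k - i) * u ^ (i+1)
      = a * S a u k (m+1) := by
    rw [S, Finset.mul_sum]
    have hext : ∑ j ∈ Finset.Icc (m+1) k, a * ((k.choose j : ℝ) * a ^ (k - j) * u ^ j)
        = ∑ j ∈ Finset.Icc (m+1) (k+1), a * ((k.choose j : ℝ) * a ^ (k - j) * u ^ j) := by
      apply Finset.sum_subset
      · apply Finset.Icc_subset_Icc_right; omega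
      · intro j hj hj'
        simp only [Finset.mem_Icc] at hj hj'
        have : j = k + 1 := by omega
        subst this
        simp [Nat.choose_succ_self]
    rw [hext, hmap, Finset.sum_map]
    simp only [addRightEmbedding_apply]
    apply Finset.sum_congr rfl
    intro i hi
    simp only [Finset.mem_Icc] at hi
    rcases Nat.lt_or_ge i k with h | h
    · have : k - i = (k - (i+1)) + 1 := by omega
      rw [this, pow_succ]
      ring
    · have : i = k := by omega
      subst this
      simp [Nat.choose_succ_self]
  rw [h1, h2, add_comm]

lemma S_pos (a u : ℝ) (ha : 0 < a) (hu : u < 0) (hau : 0 < u + a) :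
    ∀ k m : ℕ, m ≤ k → 0 < (-1) ^ m * S a u k m := by
  intro k
  induction k with
  | zero =>
    intro m hm
    interval_cases m
    simp [S]
  | succ k ih =>
    intro m hm
    match m with
    | 0 => rw [S_zero]; positivity
    | Nat.succ m' =>
      rw [S_rec]
      have h2 : 0 < (-1:ℝ) ^ (m'+1) * (u * S a u k m') := by
        have := ih m' (by omega)
        have : 0 < (-u) * ((-1:ℝ) ^ m' * S a u k m') := by
          apply mul_pos (by linarith) this
        calc (0:ℝ) < (-u) * ((-1:ℝ) ^ m' * S a u k m') := this
          _ = (-1:ℝ) ^ (m'+1) * (u * S a u k m') := by rw [pow_succ]; ring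
      have h1 : 0 ≤ (-1:ℝ) ^ (m'+1) * (a * S a u k (m'+1)) := by
        rcases Nat.lt_or_ge k (m'+1) with h | h
        · have : S a u k (m'+1) = 0 := by
            rw [S, Finset.Icc_eq_empty (by omega), Finset.sum_empty]
          simp [this]
        · have := ih (m'+1) h
          have : 0 ≤ a * ((-1:ℝ) ^ (m'+1) * S a u k (m'+1)) := le_of_lt (mul_pos ha this)
          linarith [this, show a * ((-1:ℝ) ^ (m'+1) * S a u k (m'+1)) = (-1:ℝ)^(m'+1) * (a * S a u k (m'+1)) by ring]
      have hd : (-1:ℝ)^(m'+1) * (a * S a u k (m'+1) + u * S a u k m')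
          = (-1:ℝ)^(m'+1) * (a * S a u k (m'+1)) + (-1:ℝ)^(m'+1) * (u * S a u k m') := by ring
      rw [hd]
      linarith

/-- The polynomial `P_k = ((3/2)X² − (1/2)X⁴)^k`, whose coefficients are the
total weight-`w` Pauli-path coefficients of one layer of majority-voting gates
applied to `O_k = ∏_{i=1}^k Z_{3i−2}` with initial state `|0…0⟩`. -/
noncomputable def P (k : ℕ) : Polynomial ℝ :=
  (C (3/2) * X ^ 2 - C (1/2) * X ^ 4) ^ k

/-- `F k w` is the coefficient of `X^w` in `P_k`. -/
noncomputable def F (k w : ℕ) : ℝ := (P k).coeff w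

/-- `E k ℓ x = ∑_{w > ℓ} F_w(k) x^w`: the truncation error of the Pauli-path
method with cutoff `ℓ` at `x = 1 − p` (the sum is finite since `F_w(k) = 0`
for `w > 4k`). -/
noncomputable def E (k ℓ : ℕ) (x : ℝ) : ℝ :=
  ∑ w ∈ Finset.Ioc ℓ (4 * k), F k w * x ^ w

noncomputable def cJ (k j : ℕ) : ℝ := (k.choose j : ℝ) * (3/2) ^ (k - j) * (-(1/2)) ^ j

lemma P_expand (k : ℕ) :
    P k = ∑ j ∈ Finset.range (k+1), C (cJ k j) * X ^ (2*k + 2*j) := by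
  rw [P, show (C (3/2:ℝ) * X ^ 2 - C (1/2) * X ^ 4)
      = C (-(1/2):ℝ) * X ^ 4 + C (3/2) * X ^ 2 by rw [map_neg]; ring, add_pow]
  apply Finset.sum_congr rfl
  intro j hj
  have hj' : j ≤ k := by simpa [Nat.lt_succ_iff] using hj
  have hexp : 4*j + 2*(k-j) = 2*k + 2*j := by omega
  rw [mul_pow, mul_pow, ← C_pow, ← C_pow, ← pow_mul, ← pow_mul, ← C_eq_natCast,
    cJ, C_mul, C_mul, ← hexp, pow_add]
  ring

lemma F_eq (k w : ℕ) :
    F k w = ∑ j ∈ Finset.range (k+1), if w = 2*k + 2*j then cJ k j else 0 := by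
  rw [F, P_expand, finset_sum_coeff]
  apply Finset.sum_congr rfl
  intro j hj
  rw [coeff_C_mul, coeff_X_pow]
  simp [eq_comm]

lemma F_val (k j : ℕ) (hj : j ≤ k) : F k (2*k + 2*j) = cJ k j := by
  rw [F_eq]
  rw [Finset.sum_eq_single_of_mem j (Finset.mem_range.2 (by omega))]
  · simp
  · intro i hi hij
    rw [if_neg (by omega)]

lemma F_zero (k w : ℕ) (h : ∀ j ≤ k, w ≠ 2*k + 2*j) : F k w = 0 := by
  rw [F_eq]
  apply Finset.sum_eq_zero
  intro j hj
  rw [if_neg (h j (by simpa [Nat.lt_succ_iff] using hj))]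

lemma E_eq (k r : ℕ) (x : ℝ) (hr : r < k) :
    E k (2*k + 2*r) x = ∑ j ∈ Finset.Icc (r+1) k, cJ k j * x ^ (2*k + 2*j) := by
  classical
  rw [E]
  have himg : ∑ w ∈ (Finset.Icc (r+1) k).image (fun j => 2*k + 2*j), F k w * x ^ w
      = ∑ j ∈ Finset.Icc (r+1) k, F k (2*k + 2*j) * x ^ (2*k + 2*j) :=
    Finset.sum_image (fun i _ j _ h => by omega)
  have hsub : (Finset.Icc (r+1) k).image (fun j => 2*k + 2*j) ⊆ Finset.Ioc (2*k+2*r) (4*k) := by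
    intro w hw
    simp only [Finset.mem_image, Finset.mem_Icc] at hw
    obtain ⟨j, hj, rfl⟩ := hw
    simp only [Finset.mem_Ioc]
    omega
  have hzero : ∀ w ∈ Finset.Ioc (2*k+2*r) (4*k),
      w ∉ (Finset.Icc (r+1) k).image (fun j => 2*k + 2*j) → F k w * x ^ w = 0 := by
    intro w hw hw'
    simp only [Finset.mem_Ioc] at hw
    have : F k w = 0 := by
      apply F_zero
      intro j hj hwj
      apply hw'
      simp only [Finset.mem_image, Finset.mem_Icc]
      exact ⟨j, by omega, by omega⟩
    rw [this, zero_mul]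
  rw [← Finset.sum_subset hsub hzero, himg]
  apply Finset.sum_congr rfl
  intro j hj
  simp only [Finset.mem_Icc] at hj
  rw [F_val k j (by omega)]

theorem truncation_error_sign (k : ℕ) (hk : 1 ≤ k) (ℓ : ℕ) (hℓ : Even ℓ)
    (h1 : 2 * k ≤ ℓ) (h2 : ℓ < 4 * k) (x : ℝ) (hx0 : 0 < x) (hx1 : x ≤ 1) :
    ((-1 : ℝ)) ^ ((ℓ - 2 * k) / 2) * E k ℓ x < 0 ∧
    ∀ m : ℕ, 1 ≤ m → m ≤ k →
      0 < ((-1 : ℝ)) ^ m * ∑ j ∈ Finset.Icc m k,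
        (k.choose j : ℝ) * (3/2) ^ (k - j) * (-(1/2)) ^ j * x ^ (2 * k + 2 * j) := by
  have hx2 : (0:ℝ) < x^2 := by positivity
  have hx2' : x^2 ≤ 1 := by nlinarith
  have hmain : ∀ m : ℕ, 1 ≤ m → m ≤ k →
      0 < ((-1 : ℝ)) ^ m * ∑ j ∈ Finset.Icc m k,
        (k.choose j : ℝ) * (3/2) ^ (k - j) * (-(1/2)) ^ j * x ^ (2 * k + 2 * j) := by
    intro m hm1 hmk
    have hS := S_pos (3/2) (-(x^2/2)) (by norm_num) (by nlinarith) (by nlinarith) k m hmk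
    have hsum : (∑ j ∈ Finset.Icc m k,
        (k.choose j : ℝ) * (3/2) ^ (k - j) * (-(1/2)) ^ j * x ^ (2 * k + 2 * j))
        = x ^ (2*k) * S (3/2) (-(x^2/2)) k m := by
      rw [S, Finset.mul_sum]
      apply Finset.sum_congr rfl
      intro j hj
      rw [show x ^ (2*k + 2*j) = x ^ (2*k) * (x^2)^j by rw [pow_add, pow_mul, pow_mul],
        show (-(x^2/2)) = (-(1/2:ℝ)) * x^2 by ring, mul_pow]
      ring
    rw [hsum]
    have : (0:ℝ) < x ^ (2*k) * ((-1:ℝ)^m * S (3/2) (-(x^2/2)) k m) :=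
      mul_pos (by positivity) hS
    linarith [this, show x ^ (2*k) * ((-1:ℝ)^m * S (3/2) (-(x^2/2)) k m)
      = (-1:ℝ)^m * (x ^ (2*k) * S (3/2) (-(x^2/2)) k m) by ring]
  refine ⟨?_, hmain⟩
  obtain ⟨r, hr⟩ : ∃ r, ℓ = 2*k + 2*r := by
    obtain ⟨t, ht⟩ := hℓ
    exact ⟨(ℓ - 2*k)/2, by omega⟩
  have hrk : r < k := by omega
  have hEeq : E k ℓ x = ∑ j ∈ Finset.Icc (r+1) k,
      (k.choose j : ℝ) * (3/2) ^ (k - j) * (-(1/2)) ^ j * x ^ (2 * k + 2 * j) := by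
    rw [hr, E_eq k r x hrk]
    exact Finset.sum_congr rfl fun j hj => by rw [cJ]
  have hdiv : (ℓ - 2*k)/2 = r := by omega
  have hpos := hmain (r+1) (by omega) (by omega)
  rw [hdiv, hEeq]
  rw [← hEeq] at hpos
  rw [hEeq] at hpos
  have hswap : ((-1:ℝ))^(r+1) * (∑ j ∈ Finset.Icc (r+1) k,
      (k.choose j : ℝ) * (3/2) ^ (k - j) * (-(1/2)) ^ j * x ^ (2 * k + 2 * j))
      = -(((-1:ℝ))^r * ∑ j ∈ Finset.Icc (r+1) k,
      (k.choose j : ℝ) * (3/2) ^ (k - j) * (-(1/2)) ^ j * x ^ (2 * k + 2 * j)) := by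
    rw [pow_succ]; ring
  linarith
end

section
/- For every k : ℕ, every even ℓ with 2k < ℓ ≤ 9k/4, and every x with √(2/3) < x ≤ 1, one has |E_k^{(ℓ)}(x)| ≥ (3x²/2)^k − 1. -/
open Polynomial

/-!
Since `P_k = (X²/2)^k (3 - X²)^k`, the binomial theorem writes `P_k(x)` as `∑_{j ≤ k} (-1)^j a_j`
with `a_j = C(k,j) 3^(k-j) x^(2k+2j) / 2^k` (`absTerm k (x ^ 2) j` below). For `ℓ = 2k + 2m` the
truncation error is `P_k(x) - ∑_{j ≤ m} (-1)^j a_j`, and `0 ≤ P_k(x) ≤ 1` because `x² ≤ 1`. As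
`a_{j+1} / a_j = (k - j) x² / (3 (j + 1))`, the bounds `x² > 2/3` and `8m ≤ k` make
`a_0 ≤ a_1 ≤ ⋯ ≤ a_m`, so the alternating partial sum is at least `a_0` when `m` is even and at
most `a_0 - a_1` when `m` is odd. With `a_0 = (3x²/2)^k` the even case is done; the odd case needs
`2 a_0 ≤ a_1 + 1`, which for `k ≥ 8` follows from the AM-GM inequality
`(k + 1) t^k ≤ k t^(k+1) + 1`.
-/

open Finset

section Alternating

variable {R : Type*} [Ring R] [PartialOrder R] [IsOrderedRing R] {a : ℕ → R}

theorem sum_range_two_mul_neg_one_pow_mul_nonpos {n : ℕ}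
    (h : ∀ i < n, a (2 * i) ≤ a (2 * i + 1)) :
    ∑ j ∈ range (2 * n), (-1) ^ j * a j ≤ 0 := by
  induction n with
  | zero => simp
  | succ n ih =>
    rw [show 2 * (n + 1) = 2 * n + 1 + 1 by ring, sum_range_succ, sum_range_succ, pow_succ,
      Even.neg_one_pow ⟨n, by ring⟩, add_assoc]
    refine add_nonpos (ih fun i hi => h i (hi.trans n.lt_succ_self)) ?_
    simpa [← sub_eq_add_neg] using h n n.lt_succ_self

theorem le_sum_range_neg_one_pow_mul_of_even {m : ℕ} (hm : Even m)
    (h : ∀ j < m, a j ≤ a (j + 1)) :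
    a 0 ≤ ∑ j ∈ range (m + 1), (-1) ^ j * a j := by
  obtain ⟨n, rfl⟩ := hm
  have := sum_range_two_mul_neg_one_pow_mul_nonpos (a := fun j => a (j + 1)) (n := n)
    fun i hi => h (2 * i + 1) (by omega)
  rw [sum_range_succ']
  simpa [pow_succ, ← two_mul, ← sub_eq_neg_add] using this

theorem sum_range_neg_one_pow_mul_le_of_odd {m : ℕ} (hm : Odd m)
    (h : ∀ j < m, a j ≤ a (j + 1)) :
    ∑ j ∈ range (m + 1), (-1) ^ j * a j ≤ a 0 - a 1 := by
  obtain ⟨n, rfl⟩ := hm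
  have := sum_range_two_mul_neg_one_pow_mul_nonpos (a := fun j => a (j + 2)) (n := n)
    fun i hi => h (2 * i + 2) (by omega)
  rw [sum_range_succ', sum_range_succ']
  simp only [pow_succ, pow_zero, mul_neg, mul_one, neg_neg, one_mul, zero_add, neg_mul]
  rw [add_assoc, sub_eq_neg_add, add_comm (-a 1)]
  exact add_le_of_nonpos_left this

end Alternating

namespace Polynomial

variable {R : Type*} [CommSemiring R]

theorem sum_coeff_mul_pow_sum_monomial {ι : Type*} (s : Finset ι) (e : ι → ℕ) (c : ι → R)
    (S : Finset ℕ) (x : R) :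
    ∑ w ∈ S, (∑ i ∈ s, monomial (e i) (c i)).coeff w * x ^ w =
      ∑ i ∈ s with e i ∈ S, c i * x ^ e i := by
  simp only [finsetSum_coeff, coeff_monomial, sum_mul, ite_mul, zero_mul]
  rw [sum_comm, sum_filter]
  exact sum_congr rfl fun i _ => sum_ite_eq S (e i) _

end Polynomial

noncomputable def absTerm (k : ℕ) (y : ℝ) (j : ℕ) : ℝ :=
  k.choose j * 3 ^ (k - j) / 2 ^ k * y ^ (k + j)

theorem P_eq_sum_monomial (k : ℕ) :
    P k = ∑ j ∈ range (k + 1),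
      monomial (2 * k + 2 * j) ((-1 : ℝ) ^ j * k.choose j * 3 ^ (k - j) / 2 ^ k) := by
  have hfac : C (3/2 : ℝ) * X ^ 2 - C (1/2) * X ^ 4 = C (1/2) * X ^ 2 * (-X ^ 2 + C 3) := by
    simp only [show (3/2 : ℝ) = 1/2 * 3 by norm_num, C_mul]; ring
  rw [P, hfac, mul_pow, add_pow, mul_sum]
  refine sum_congr rfl fun j _ => ?_
  simp only [← C_mul_X_pow_eq_monomial, C_mul, C_pow, map_natCast, map_neg, map_one,
    div_eq_mul_inv, ← inv_pow]
  ring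

theorem eval_P_eq_sum_absTerm (k : ℕ) (x : ℝ) :
    (P k).eval x = ∑ j ∈ range (k + 1), (-1) ^ j * absTerm k (x ^ 2) j := by
  simp only [P_eq_sum_monomial, eval_finsetSum, eval_monomial, absTerm]
  exact sum_congr rfl fun j _ => by rw [← pow_mul, mul_add]; ring

theorem E_eq_sum_absTerm (k ℓ : ℕ) (x : ℝ) :
    E k ℓ x =
      ∑ j ∈ range (k + 1) with 2 * k + 2 * j ∈ Ioc ℓ (4 * k),
        (-1) ^ j * absTerm k (x ^ 2) j := by
  simp only [E, F, P_eq_sum_monomial, sum_coeff_mul_pow_sum_monomial, absTerm]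
  exact sum_congr rfl fun j _ => by rw [← pow_mul, mul_add]; ring

theorem E_eq_eval_P_sub (k m : ℕ) (hm : m ≤ k) (x : ℝ) :
    E k (2 * k + 2 * m) x =
      (P k).eval x - ∑ j ∈ range (m + 1), (-1) ^ j * absTerm k (x ^ 2) j := by
  have hlow :
      {j ∈ range (k + 1) | 2 * k + 2 * j ∉ Ioc (2 * k + 2 * m) (4 * k)} = range (m + 1) := by
    ext j; simp only [mem_filter, mem_range, mem_Ioc]; omega
  rw [E_eq_sum_absTerm, eval_P_eq_sum_absTerm, ← sum_filter_add_sum_filter_not (range (k + 1))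
    (fun j => 2 * k + 2 * j ∈ Ioc (2 * k + 2 * m) (4 * k)), hlow, add_sub_cancel_right]

theorem eval_P_mem_Icc (k : ℕ) {x : ℝ} (hx : x ^ 2 ≤ 1) : (P k).eval x ∈ Set.Icc 0 1 := by
  have h0 : 0 ≤ 3 / 2 * x ^ 2 - 1 / 2 * x ^ 4 := by nlinarith [sq_nonneg x]
  have h1 : 3 / 2 * x ^ 2 - 1 / 2 * x ^ 4 ≤ 1 := by nlinarith [sq_nonneg x]
  simp only [P, eval_pow, eval_sub, eval_mul, eval_C, eval_X]
  exact ⟨pow_nonneg h0 k, pow_le_one₀ h0 h1⟩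

theorem absTerm_nonneg (k : ℕ) {y : ℝ} (hy : 0 ≤ y) (j : ℕ) : 0 ≤ absTerm k y j := by
  unfold absTerm; positivity

theorem absTerm_succ_mul (k j : ℕ) (y : ℝ) (hj : j < k) :
    absTerm k y (j + 1) * (3 * (j + 1)) = absTerm k y j * ((k - j) * y) := by
  have hchoose : (k.choose (j + 1) : ℝ) * (j + 1) = k.choose j * (k - j) := by
    have := congrArg (Nat.cast : ℕ → ℝ) (k.choose_succ_right_eq j)
    push_cast [Nat.cast_sub hj.le] at this
    exact this
  have hthree : (3 : ℝ) ^ (k - j) = 3 ^ (k - (j + 1)) * 3 := by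
    rw [← pow_succ]; congr 1; omega
  unfold absTerm
  rw [hthree, show k + (j + 1) = k + j + 1 by ring, pow_succ]
  linear_combination (3 ^ (k - (j + 1)) / 2 ^ k * y ^ (k + j) * y * 3) * hchoose

theorem absTerm_le_absTerm_succ {k j : ℕ} {y : ℝ} (hy : 0 ≤ y)
    (h : 3 * (j + 1) ≤ ((k : ℝ) - j) * y) :
    absTerm k y j ≤ absTerm k y (j + 1) := by
  have hjk : j < k := by
    by_contra! hkj
    have : ((k : ℝ) - j) * y ≤ 0 :=
      mul_nonpos_of_nonpos_of_nonneg (sub_nonpos.2 (by exact_mod_cast hkj)) hy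
    linarith
  refine le_of_mul_le_mul_right ?_ (by positivity : (0 : ℝ) < 3 * (j + 1))
  rw [absTerm_succ_mul k j y hjk]
  exact mul_le_mul_of_nonneg_left h (absTerm_nonneg k hy j)

theorem absTerm_zero (k : ℕ) (y : ℝ) : absTerm k y 0 = (3 * y / 2) ^ k := by
  simp only [absTerm, Nat.choose_zero_right, Nat.cast_one, tsub_zero, add_zero,
    div_pow, mul_pow]
  ring

theorem absTerm_one (k : ℕ) (y : ℝ) : absTerm k y 1 = 2 * k / 9 * (3 * y / 2) ^ (k + 1) := by
  cases k with
  | zero => simp [absTerm]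
  | succ k =>
    simp only [absTerm, Nat.choose_one_right, Nat.cast_add, Nat.cast_one, add_tsub_cancel_right,
      div_pow, mul_pow]
    ring

theorem succ_mul_pow_le_mul_pow_succ_add_one {t : ℝ} (ht : 0 ≤ t) (n : ℕ) :
    (n + 1) * t ^ n ≤ n * t ^ (n + 1) + 1 := by
  induction n with
  | zero => simp
  | succ n ih =>
    have : 0 ≤ (t - 1) * (t ^ (n + 1) - 1) := by
      rcases le_total t 1 with h | h
      · exact mul_nonneg_of_nonpos_of_nonpos (by linarith)
          (by linarith [pow_le_one₀ ht h (n := n + 1)])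
      · exact mul_nonneg (by linarith) (by linarith [one_le_pow₀ h (n := n + 1)])
    push_cast
    nlinarith [mul_nonneg ht (sub_nonneg.2 ih), pow_succ t n, pow_succ t (n + 1)]

theorem two_mul_absTerm_zero_le {k : ℕ} (hk : 8 ≤ k) {y : ℝ} (hy : 0 ≤ y) :
    2 * absTerm k y 0 ≤ absTerm k y 1 + 1 := by
  set t := 3 * y / 2
  have ht : 0 ≤ t := by positivity
  have amgm := succ_mul_pow_le_mul_pow_succ_add_one ht k
  have hk' : (8 : ℝ) ≤ k := by exact_mod_cast hk
  have hpow := pow_nonneg ht (k + 1)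
  rw [absTerm_zero, absTerm_one]
  refine le_of_mul_le_mul_left ?_ (by positivity : (0 : ℝ) < k + 1)
  nlinarith [mul_nonneg (sub_nonneg.2 hk') hpow]

theorem truncation_error_lower_bound (k ℓ : ℕ) (hℓ : Even ℓ)
    (h1 : 2 * k < ℓ) (h2 : 4 * ℓ ≤ 9 * k)
    (x : ℝ) (hx0 : Real.sqrt (2/3) < x) (hx1 : x ≤ 1) :
    (3 * x ^ 2 / 2) ^ k - 1 ≤ |E k ℓ x| := by
  obtain ⟨m, rfl⟩ : ∃ m, ℓ = 2 * k + 2 * m := by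
    obtain ⟨c, rfl⟩ := hℓ
    exact ⟨c - k, by omega⟩
  have hx_sq_gt : 2 / 3 < x ^ 2 := Real.lt_sq_of_sqrt_lt hx0
  have hx_sq_le : x ^ 2 ≤ 1 := by nlinarith [Real.sqrt_nonneg (2 / 3)]
  have hmono : ∀ j < m, absTerm k (x ^ 2) j ≤ absTerm k (x ^ 2) (j + 1) := fun j hj => by
    have : (9 * (j + 1) + 2 * j : ℝ) ≤ 2 * k := by
      exact_mod_cast (by omega : 9 * (j + 1) + 2 * j ≤ 2 * k)
    exact absTerm_le_absTerm_succ (sq_nonneg x) (by nlinarith)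
  have hE := E_eq_eval_P_sub k m (by omega) x
  obtain ⟨hP0, hP1⟩ := eval_P_mem_Icc k hx_sq_le
  rw [← absTerm_zero k (x ^ 2)]
  rcases m.even_or_odd with hm | hm
  · have hsum := le_sum_range_neg_one_pow_mul_of_even hm hmono
    rw [hE, abs_sub_comm]
    linarith [le_abs_self (∑ j ∈ range (m + 1), (-1) ^ j * absTerm k (x ^ 2) j - (P k).eval x)]
  · have hsum := sum_range_neg_one_pow_mul_le_of_odd hm hmono
    have hk : 8 ≤ k := by obtain ⟨n, rfl⟩ := hm; omega
    have hkey := two_mul_absTerm_zero_le hk (sq_nonneg x)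
    rw [hE]
    linarith [le_abs_self ((P k).eval x - ∑ j ∈ range (m + 1), (-1) ^ j * absTerm k (x ^ 2) j)]
end

section
/- For every k ≥ 1 and every x with 0 < x ≤ 1, E_k^{(2k)}(x) = ((3x² − x⁴)/2)^k − (3x²/2)^k; consequently |E_k^{(2k)}(x)| = (3x²/2)^k − ((3x² − x⁴)/2)^k ≥ (3x²/2)^k − 1. -/
open Polynomial

lemma P_eq (k : ℕ) : P k = X ^ (2 * k) * (C (3/2) - C (1/2) * X ^ 2) ^ k := by
  rw [P, show (C (3/2) * X ^ 2 - C (1/2) * X ^ 4 : Polynomial ℝ)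
      = X ^ 2 * (C (3/2) - C (1/2) * X ^ 2) by ring, mul_pow, ← pow_mul]

lemma coeff_P (k w : ℕ) :
    (P k).coeff w = if 2 * k ≤ w then ((C (3/2) - C (1/2) * X ^ 2 : Polynomial ℝ) ^ k).coeff (w - 2 * k) else 0 := by
  rw [P_eq, mul_comm, Polynomial.coeff_mul_X_pow']

lemma natDegree_P (k : ℕ) : (P k).natDegree ≤ 4 * k := by
  unfold P
  compute_degree
  omega

theorem truncation_error_at_2k (k : ℕ) (hk : 1 ≤ k) (x : ℝ) (hx0 : 0 < x) (hx1 : x ≤ 1) :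
    E k (2 * k) x = ((3 * x ^ 2 - x ^ 4) / 2) ^ k - (3 * x ^ 2 / 2) ^ k ∧
    |E k (2 * k) x| = (3 * x ^ 2 / 2) ^ k - ((3 * x ^ 2 - x ^ 4) / 2) ^ k ∧
    (3 * x ^ 2 / 2) ^ k - 1 ≤ |E k (2 * k) x| := by
  have heval : (P k).eval x = ((3 * x ^ 2 - x ^ 4) / 2) ^ k := by
    simp only [P, eval_pow, eval_sub, eval_mul, eval_C, eval_pow, eval_X]
    ring_nf
  have hsum : ∑ w ∈ Finset.range (4 * k + 1), F k w * x ^ w = (P k).eval x := by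
    rw [Polynomial.eval_eq_sum_range' (Nat.lt_succ_of_le (natDegree_P k))]
    rfl
  have hsplit : Finset.range (4 * k + 1) = Finset.range (2 * k + 1) ∪ Finset.Ioc (2 * k) (4 * k) := by
    ext w
    simp [Finset.mem_range, Finset.mem_Ioc, Nat.lt_succ_iff]
    omega
  have hlow : ∑ w ∈ Finset.range (2 * k + 1), F k w * x ^ w = (3 * x ^ 2 / 2) ^ k := by
    rw [Finset.sum_range_succ]
    have h0 : ∀ w ∈ Finset.range (2 * k), F k w * x ^ w = 0 := by
      intro w hw
      simp only [Finset.mem_range] at hw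
      have : F k w = 0 := by
        rw [F, coeff_P, if_neg (by omega)]
      simp [this]
    rw [Finset.sum_eq_zero h0, zero_add]
    have hc : F k (2 * k) = (3 / 2) ^ k := by
      rw [F, coeff_P, if_pos le_rfl, Nat.sub_self]
      rw [Polynomial.coeff_zero_eq_eval_zero]
      simp
    rw [hc, show 3 * x ^ 2 / 2 = 3 / 2 * x ^ 2 by ring, mul_pow, ← pow_mul]
  have hE : E k (2 * k) x = ((3 * x ^ 2 - x ^ 4) / 2) ^ k - (3 * x ^ 2 / 2) ^ k := by
    have hdisj : Disjoint (Finset.range (2 * k + 1)) (Finset.Ioc (2 * k) (4 * k)) := by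
      rw [Finset.disjoint_left]
      intro w hw hw'
      simp [Finset.mem_range, Finset.mem_Ioc] at hw hw'
      omega
    have := hsum
    rw [hsplit, Finset.sum_union hdisj, hlow, heval] at this
    rw [E]
    linarith
  have hx2 : x ^ 2 ≤ 1 := by nlinarith
  have hx2p : 0 < x ^ 2 := by positivity
  have hbase0 : (0:ℝ) ≤ 3 * x ^ 2 - x ^ 4 := by nlinarith [hx2, hx2p]
  have hbase1 : (3 * x ^ 2 - x ^ 4) / 2 ≤ 1 := by nlinarith
  have hle : ((3 * x ^ 2 - x ^ 4) / 2) ^ k ≤ (3 * x ^ 2 / 2) ^ k := by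
    apply pow_le_pow_left₀ (by linarith)
    nlinarith
  have h1 : ((3 * x ^ 2 - x ^ 4) / 2) ^ k ≤ 1 := pow_le_one₀ (by linarith) hbase1
  refine ⟨hE, ?_, ?_⟩
  · rw [hE, abs_of_nonpos (by linarith), neg_sub]
  · rw [hE, abs_of_nonpos (by linarith), neg_sub]
    linarith
end

section
/- For every even ℓ, every k ≥ 1 with 8k ≤ ℓ < 16k, and every x with 0 < x ≤ 1, one has (−1)^{ℓ/2} · E_{4k}^{(ℓ)}(x) < 0. In particular, for a fixed even cutoff ℓ and fixed x ∈ (0,1], all the truncation errors E_{4k}^{(ℓ)}(x) over indices k with 8k ≤ ℓ < 16k have the same sign (−1)^{ℓ/2+1}, independent of k. -/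
/-!
`P n = (3/2)^n X^{2n} (1 - X²/3)^n`, so with `y = -x²/3` the error `E n (2c) x` is
`(3/2)^n x^{2n}` times the tail `∑_{j > c - n} C(n,j) y^j` of the binomial expansion of
`(1 + y)^n`. For `-1 < y < 0` the tail `T(n, m)` starting at index `m ≤ n` has sign `(-1)^m`:
Pascal's rule gives `T(n+1, m+1) = T(n, m+1) + y T(n, m)`, where both terms have sign
`(-1)^(m+1)`, and the recursion ends at `T(n, 0) = (1 + y)^n > 0`.
-/

open Polynomial

open Finset

/-- Written as a difference, rather than as `∑ j ∈ Ico m (n + 1), n.choose j * y ^ j`, so that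
Pascal's rule `binomTail_succ_succ` holds for every `m`. -/
def binomTail {R : Type*} [CommRing R] (n m : ℕ) (y : R) : R :=
  (1 + y) ^ n - ∑ j ∈ range m, (n.choose j : R) * y ^ j

section BinomTail

variable {R : Type*} [CommRing R]

theorem sum_range_choose_mul_pow (n : ℕ) (y : R) :
    ∑ j ∈ range (n + 1), (n.choose j : R) * y ^ j = (1 + y) ^ n := by
  rw [add_comm (1 : R) y, add_pow]
  simp only [one_pow, mul_one, mul_comm]

theorem binomTail_zero_right (n : ℕ) (y : R) : binomTail n 0 y = (1 + y) ^ n := by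
  simp [binomTail]

theorem binomTail_succ_self (n : ℕ) (y : R) : binomTail n (n + 1) y = 0 := by
  rw [binomTail, sum_range_choose_mul_pow, sub_self]

theorem binomTail_eq_sum_Ico {n m : ℕ} (h : m ≤ n + 1) (y : R) :
    binomTail n m y = ∑ j ∈ Ico m (n + 1), (n.choose j : R) * y ^ j := by
  rw [binomTail, ← sum_range_choose_mul_pow, sum_Ico_eq_sub _ h]

theorem binomTail_succ_succ (n m : ℕ) (y : R) :
    binomTail (n + 1) (m + 1) y = binomTail n (m + 1) y + y * binomTail n m y := by
  have hhead : ∑ j ∈ range (m + 1), ((n + 1).choose j : R) * y ^ j =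
      ∑ j ∈ range (m + 1), (n.choose j : R) * y ^ j +
        y * ∑ j ∈ range m, (n.choose j : R) * y ^ j := by
    have hpascal : ∀ i, ((n + 1).choose (i + 1) : R) * y ^ (i + 1) =
        (n.choose (i + 1) : R) * y ^ (i + 1) + y * ((n.choose i : R) * y ^ i) := fun i => by
      rw [Nat.choose_succ_succ', Nat.cast_add]
      ring
    simp only [sum_range_succ' _ m, hpascal, sum_add_distrib, mul_sum, Nat.choose_zero_right]
    ring
  rw [binomTail, binomTail, binomTail, hhead, pow_succ]
  ring

end BinomTail

theorem neg_one_pow_mul_binomTail_pos {R : Type*} [CommRing R] [LinearOrder R]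
    [IsStrictOrderedRing R] {y : R} (hy0 : y < 0) (hy1 : -1 < y) :
    ∀ {n m : ℕ}, m ≤ n → 0 < (-1) ^ m * binomTail n m y
  | n, 0, _ => by
    rw [pow_zero, one_mul, binomTail_zero_right]
    exact pow_pos (by linarith) n
  | n + 1, m + 1, hm => by
    have hlow : 0 < (-1) ^ m * binomTail n m y := neg_one_pow_mul_binomTail_pos hy0 hy1 (by omega)
    have hhigh : 0 ≤ (-1) ^ (m + 1) * binomTail n (m + 1) y := by
      rcases Nat.lt_or_ge m n with h | h
      · exact (neg_one_pow_mul_binomTail_pos hy0 hy1 h).le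
      · rw [show m = n by omega, binomTail_succ_self, mul_zero]
    have hsplit : (-1) ^ (m + 1) * binomTail (n + 1) (m + 1) y =
        (-1) ^ (m + 1) * binomTail n (m + 1) y + -y * ((-1) ^ m * binomTail n m y) := by
      rw [binomTail_succ_succ, pow_succ]; ring
    rw [hsplit]
    exact add_pos_of_nonneg_of_pos hhigh (mul_pos (neg_pos.2 hy0) hlow)

theorem P_eq_sum (n : ℕ) :
    P n = ∑ j ∈ range (n + 1),
      C ((3/2 : ℝ) ^ n * n.choose j * (-1/3) ^ j) * X ^ (2 * n + 2 * j) := by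
  have hhalf : C (1/2 : ℝ) = -(C (3/2) * C (-1/3)) := by
    rw [← C_mul, ← C_neg]
    norm_num
  have hfactor : (C (3/2) * X ^ 2 - C (1/2) * X ^ 4 : ℝ[X]) =
      C (3/2) * X ^ 2 * (1 + C (-1/3) * X ^ 2) := by
    rw [hhalf]
    ring
  rw [P, hfactor, mul_pow, ← sum_range_choose_mul_pow, mul_sum]
  refine sum_congr rfl fun j _ => ?_
  simp only [map_mul, map_pow, map_natCast, pow_add, pow_mul]
  ring

theorem E_eq_binomTail {n c : ℕ} (hc : c ≤ 2 * n) (x : ℝ) :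
    E n (2 * c) x = (3/2) ^ n * x ^ (2 * n) * binomTail n (c + 1 - n) (-x ^ 2 / 3) := by
  have hF : ∀ w, F n w = ∑ j ∈ range (n + 1),
      if w = 2 * n + 2 * j then (3/2) ^ n * n.choose j * (-1/3 : ℝ) ^ j else 0 := fun w => by
    simp only [F, P_eq_sum, finsetSum_coeff, coeff_C_mul, coeff_X_pow, mul_ite, mul_one, mul_zero]
  have hrange : (range (n + 1)).filter (fun j => 2 * n + 2 * j ∈ Ioc (2 * c) (4 * n)) =
      Ico (c + 1 - n) (n + 1) := by
    ext j
    simp only [mem_filter, mem_range, mem_Ioc, mem_Ico]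
    omega
  simp only [E, hF, sum_mul, ite_mul, zero_mul]
  rw [sum_comm]
  simp only [sum_ite_eq', ← sum_filter, hrange,
    binomTail_eq_sum_Ico (by omega : c + 1 - n ≤ n + 1), mul_sum]
  refine sum_congr rfl fun j _ => ?_
  rw [pow_add, pow_mul, pow_mul, div_eq_mul_inv, mul_pow]
  ring

theorem truncation_error_sign_O4k_general (ℓ : ℕ) (hℓ : Even ℓ) (k : ℕ)
    (h1 : 8 * k ≤ ℓ) (h2 : ℓ < 16 * k) (x : ℝ) (hx0 : 0 < x) (hx1 : x ≤ 1) :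
    ((-1 : ℝ)) ^ (ℓ / 2) * E (4 * k) ℓ x < 0 := by
  obtain ⟨c, rfl⟩ := hℓ
  obtain ⟨d, rfl⟩ : ∃ d, c = 4 * k + d := ⟨c - 4 * k, by omega⟩
  have hy0 : -x ^ 2 / 3 < 0 := by nlinarith
  have hy1 : -1 < -x ^ 2 / 3 := by nlinarith
  have htail := neg_one_pow_mul_binomTail_pos hy0 hy1 (n := 4 * k) (m := d + 1) (by omega)
  have hsign : (-1 : ℝ) ^ (4 * k + d) = (-1) ^ d := by
    rw [pow_add, pow_mul]; norm_num
  rw [show (4 * k + d + (4 * k + d)) / 2 = 4 * k + d by omega, ← two_mul,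
    E_eq_binomTail (by omega), show 4 * k + d + 1 - 4 * k = d + 1 by omega, hsign]
  calc (-1 : ℝ) ^ d *
        ((3/2) ^ (4 * k) * x ^ (2 * (4 * k)) * binomTail (4 * k) (d + 1) (-x ^ 2 / 3))
      = -((3/2) ^ (4 * k) * x ^ (2 * (4 * k))) *
          ((-1) ^ (d + 1) * binomTail (4 * k) (d + 1) (-x ^ 2 / 3)) := by ring
    _ < 0 := mul_neg_of_neg_of_pos (neg_neg_of_pos (by positivity)) htail

theorem truncation_error_sign_O4k (ℓ : ℕ) (hℓ : Even ℓ) (k : ℕ) (hk : 1 ≤ k)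
    (h1 : 8 * k ≤ ℓ) (h2 : ℓ < 16 * k) (x : ℝ) (hx0 : 0 < x) (hx1 : x ≤ 1) :
    ((-1 : ℝ)) ^ (ℓ / 2) * E (4 * k) ℓ x < 0 :=
  truncation_error_sign_O4k_general ℓ hℓ k h1 h2 x hx0 hx1
end

section
/- Let Q(x) = a·∏_{i=1}^{M} (x − r_i) with a ≠ 0 and r_1, …, r_M ∈ ℝ, let R ≥ 0, g : ℕ, and x₀ ∈ [0,1). Assume at least g of the roots (with multiplicity) satisfy |r_i| ≤ R, and that no root lies in the interval [x₀, 1]. Then for every x ∈ [x₀, 1]: |Q(x)| ≤ |Q(1)| · exp( −(Q'(1)/Q(1))·(1 − x) − (g/(2·(1 + R)²))·(1 − x)² ), where Q' is the derivative of Q. Equivalently, log|Q(x)| − log|Q(1)| ≤ −(Q'(1)/Q(1))·(1 − x) − (g/(2·(1 + R)²))·(1 − x)². -/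
/-!
Write `|Q x| = |Q 1| * ∏ uᵢ` with `uᵢ = (x - rᵢ) / (1 - rᵢ) > 0`; the linear parts
`uᵢ - 1 = -(1 - x) / (1 - rᵢ)` add up to `-(Q'(1) / Q(1)) * (1 - x)`. Strong concavity of `log` on
`(0, max 1 u]` gives `log u ≤ (u - 1) - (u - 1)² / (2 * (max 1 u)²)`, and
`|1 - r| * max 1 u = max |1 - r| |x - r| ≤ 1 + |r|`, so every root contributes a quadratic gain
`(1 - x)² / (2 * (1 + |r|)²)`, which is at least `(1 - x)² / (2 * (1 + R)²)` for the `g` roots of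
modulus at most `R`.
-/

open Real Finset

lemma Real.log_le_sub_one_sub_sq_div_two {u : ℝ} (hu₀ : 0 < u) (hu₁ : u ≤ 1) :
    log u ≤ u - 1 - (u - 1) ^ 2 / 2 := by
  have ht : 0 ≤ 1 - u := sub_nonneg.2 hu₁
  have hsum := hasSum_pow_div_log_of_abs_lt_one (x := 1 - u) (by rw [abs_of_nonneg ht]; linarith)
  have := sum_le_hasSum (range 2) (fun n _ => by positivity) hsum
  norm_num [sum_range_succ] at this
  nlinarith

lemma Real.log_le_sub_one_sub_sq_div_two_mul_sq {u : ℝ} (hu : 1 ≤ u) :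
    log u ≤ u - 1 - (u - 1) ^ 2 / (2 * u ^ 2) := by
  have hu₀ : 0 < u := by linarith
  have ht : 0 ≤ u - 1 := sub_nonneg.2 hu
  have hsinh : log u ≤ (u - u⁻¹) / 2 := sinh_log hu₀ ▸ self_le_sinh_iff.2 (log_nonneg hu)
  have hgap : (u - u⁻¹) / 2 = u - 1 - (u - 1) ^ 2 / (2 * u ^ 2) - (u - 1) ^ 3 / (2 * u ^ 2) := by
    field_simp; ring
  have : 0 ≤ (u - 1) ^ 3 / (2 * u ^ 2) := by positivity
  linarith

lemma Real.log_le_sub_one_sub_sq_div_max {u : ℝ} (hu : 0 < u) :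
    log u ≤ u - 1 - (u - 1) ^ 2 / (2 * max 1 u ^ 2) := by
  rcases le_total u 1 with h | h
  · simpa [max_eq_left h] using log_le_sub_one_sub_sq_div_two hu h
  · simpa [max_eq_right h] using log_le_sub_one_sub_sq_div_two_mul_sq h

lemma abs_sub_le_abs_one_sub_mul_exp {x r : ℝ} (hx : x ∈ Set.Icc 0 1) (hr : r ∉ Set.Icc x 1) :
    |x - r| ≤ |1 - r| * exp (-(1 - x) / (1 - r) - (1 - x) ^ 2 / (2 * (1 + |r|) ^ 2)) := by
  obtain ⟨hx₀, hx₁⟩ := hx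
  have hr' : r < x ∨ 1 < r := by
    by_contra! h
    exact hr h
  have h1r : 1 - r ≠ 0 := sub_ne_zero.2 fun h => hr ⟨h ▸ hx₁, h.ge⟩
  set u := (x - r) / (1 - r) with hu_def
  have hu : 0 < u := by
    rcases hr' with h | h
    · exact div_pos (by linarith) (by linarith)
    · exact div_pos_of_neg_of_neg (by linarith) (by linarith)
  have hu1 : u - 1 = -(1 - x) / (1 - r) := by rw [hu_def]; field_simp; ring
  have hmax : |1 - r| * max 1 u ≤ 1 + |r| := by
    rw [mul_max_of_nonneg _ _ (abs_nonneg _), mul_one]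
    refine max_le (by simpa using abs_sub (1 : ℝ) r) ?_
    rw [← abs_of_pos hu, ← abs_mul, hu_def, mul_div_cancel₀ _ h1r]
    calc |x - r| ≤ |x| + |r| := abs_sub _ _
      _ ≤ 1 + |r| := by rw [abs_of_nonneg hx₀]; linarith
  have hquad : (1 - x) ^ 2 / (2 * (1 + |r|) ^ 2) ≤ (u - 1) ^ 2 / (2 * max 1 u ^ 2) := by
    have hm : 0 < max 1 u := lt_max_of_lt_left one_pos
    have : (u - 1) ^ 2 / (2 * max 1 u ^ 2) = (1 - x) ^ 2 / (2 * (|1 - r| * max 1 u) ^ 2) := by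
      rw [hu1, mul_pow, sq_abs]; field_simp
    rw [this]
    gcongr
  calc |x - r| = |1 - r| * u := by
        rw [← abs_of_pos hu, ← abs_mul, hu_def, mul_div_cancel₀ _ h1r]
    _ ≤ |1 - r| * exp (u - 1 - (u - 1) ^ 2 / (2 * max 1 u ^ 2)) := by
        gcongr
        exact (log_le_iff_le_exp hu).1 (log_le_sub_one_sub_sq_div_max hu)
    _ ≤ _ := by
        gcongr
        linarith

section Fintype

variable {ι : Type*} [Fintype ι]

lemma logDeriv_const_mul_prod_sub {a y : ℝ} (ha : a ≠ 0) {r : ι → ℝ} (hr : ∀ i, y ≠ r i) :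
    logDeriv (fun z => a * ∏ i, (z - r i)) y = ∑ i, (y - r i)⁻¹ := by
  rw [logDeriv_const_mul _ _ ha, logDeriv_prod (fun i _ => sub_ne_zero.2 (hr i)) (by fun_prop)]
  simp [logDeriv_apply]

lemma prod_abs_sub_le {x : ℝ} (hx : x ∈ Set.Icc 0 1) {r : ι → ℝ} (hr : ∀ i, r i ∉ Set.Icc x 1) :
    ∏ i, |x - r i| ≤ (∏ i, |1 - r i|) *
      exp (-(∑ i, (1 - r i)⁻¹) * (1 - x) - (1 - x) ^ 2 / 2 * ∑ i, ((1 + |r i|) ^ 2)⁻¹) := by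
  calc ∏ i, |x - r i|
      ≤ ∏ i, |1 - r i| * exp (-(1 - x) / (1 - r i) - (1 - x) ^ 2 / (2 * (1 + |r i|) ^ 2)) :=
        prod_le_prod (fun i _ => abs_nonneg _)
          (fun i _ => abs_sub_le_abs_one_sub_mul_exp hx (hr i))
    _ = _ := by
        rw [prod_mul_distrib, ← exp_sum, neg_mul, sum_mul, mul_sum, ← sum_neg_distrib,
          ← sum_sub_distrib]
        congr 2
        refine sum_congr rfl fun i _ => ?_
        rw [div_mul_eq_div_div, div_eq_mul_inv _ ((1 + |r i|) ^ 2)]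
        ring

lemma natCast_div_sq_le_sum_inv_sq {r : ι → ℝ} {R : ℝ} {g : ℕ}
    (hg : g ≤ #{i | |r i| ≤ R}) :
    (g : ℝ) / (1 + R) ^ 2 ≤ ∑ i, ((1 + |r i|) ^ 2)⁻¹ := by
  calc (g : ℝ) / (1 + R) ^ 2 ≤ #{i | |r i| ≤ R} * ((1 + R) ^ 2)⁻¹ := by
        rw [div_eq_mul_inv]; gcongr
    _ = ∑ i with |r i| ≤ R, ((1 + R) ^ 2)⁻¹ := by rw [sum_const, nsmul_eq_mul]
    _ ≤ ∑ i with |r i| ≤ R, ((1 + |r i|) ^ 2)⁻¹ := by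
        refine sum_le_sum fun i hi => ?_
        gcongr
        exact (mem_filter.1 hi).2
    _ ≤ ∑ i, ((1 + |r i|) ^ 2)⁻¹ := sum_le_sum_of_subset_of_nonneg (filter_subset _ _)
        (fun i _ _ => by positivity)

end Fintype

theorem real_rooted_poly_decay_general (M : ℕ) (a : ℝ) (ha : a ≠ 0) (r : Fin M → ℝ)
    (R : ℝ) (g : ℕ) (x₀ : ℝ) (hx₀ : x₀ ∈ Set.Ico (0 : ℝ) 1)
    (Q : ℝ → ℝ) (hQ : ∀ x, Q x = a * ∏ i, (x - r i))
    (hroots : g ≤ (Finset.univ.filter fun i => |r i| ≤ R).card)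
    (hnoroots : ∀ i, r i ∉ Set.Icc x₀ 1)
    (x : ℝ) (hx : x ∈ Set.Icc x₀ 1) :
    |Q x| ≤ |Q 1| * Real.exp (-(deriv Q 1 / Q 1) * (1 - x)
      - ((g : ℝ) / (2 * (1 + R) ^ 2)) * (1 - x) ^ 2) := by
  have hx01 : x ∈ Set.Icc 0 1 := ⟨hx₀.1.trans hx.1, hx.2⟩
  have hr : ∀ i, r i ∉ Set.Icc x 1 := fun i h => hnoroots i ⟨hx.1.trans h.1, h.2⟩
  have hlogDeriv : deriv Q 1 / Q 1 = ∑ i, (1 - r i)⁻¹ := by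
    rw [← logDeriv_apply, funext hQ]
    exact logDeriv_const_mul_prod_sub ha fun i h => hr i ⟨h ▸ hx.2, h.ge⟩
  have hcount : (g : ℝ) / (2 * (1 + R) ^ 2) * (1 - x) ^ 2 ≤
      (1 - x) ^ 2 / 2 * ∑ i, ((1 + |r i|) ^ 2)⁻¹ := by
    calc (g : ℝ) / (2 * (1 + R) ^ 2) * (1 - x) ^ 2 = (1 - x) ^ 2 / 2 * (g / (1 + R) ^ 2) := by
          rw [div_mul_eq_div_div]; ring
      _ ≤ _ := by gcongr; exact natCast_div_sq_le_sum_inv_sq hroots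
  calc |Q x| = |a| * ∏ i, |x - r i| := by rw [hQ, abs_mul, abs_prod]
    _ ≤ |a| * ((∏ i, |1 - r i|) *
          exp (-(∑ i, (1 - r i)⁻¹) * (1 - x) - (1 - x) ^ 2 / 2 * ∑ i, ((1 + |r i|) ^ 2)⁻¹)) := by
        gcongr; exact prod_abs_sub_le hx01 hr
    _ ≤ |Q 1| * exp (-(deriv Q 1 / Q 1) * (1 - x) - g / (2 * (1 + R) ^ 2) * (1 - x) ^ 2) := by
        rw [hlogDeriv, hQ 1, abs_mul, abs_prod, ← mul_assoc]
        gcongr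

theorem real_rooted_poly_decay (M : ℕ) (a : ℝ) (ha : a ≠ 0) (r : Fin M → ℝ)
    (R : ℝ) (hR : 0 ≤ R) (g : ℕ) (x₀ : ℝ) (hx₀ : x₀ ∈ Set.Ico (0 : ℝ) 1)
    (Q : ℝ → ℝ) (hQ : ∀ x, Q x = a * ∏ i, (x - r i))
    (hroots : g ≤ (Finset.univ.filter fun i => |r i| ≤ R).card)
    (hnoroots : ∀ i, r i ∉ Set.Icc x₀ 1)
    (x : ℝ) (hx : x ∈ Set.Icc x₀ 1) :
    |Q x| ≤ |Q 1| * Real.exp (-(deriv Q 1 / Q 1) * (1 - x)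
      - ((g : ℝ) / (2 * (1 + R) ^ 2)) * (1 - x) ^ 2) :=
  real_rooted_poly_decay_general M a ha r R g x₀ hx₀ Q hQ hroots hnoroots x hx
end

section
/- Let Q(x) = a·∏_{i=1}^{M} (x − r_i) with a ≠ 0 and r_1, …, r_M ∈ ℝ, let R ≥ 0, g ≥ 1, and x₀ ∈ [0,1). Assume: at least g of the roots (with multiplicity) satisfy |r_i| ≤ R; no root lies in the interval [x₀, 1]; and |Q(t)| ≤ 1 for all t ∈ [x₀, 1]. Set c = g/(1 + R)² and D = √((2/c)·log(1/|Q(1)|)) (well-defined since 0 < |Q(1)| ≤ 1). Then for every x ∈ [x₀, 1]: |Q(x)| ≤ exp( −(c/2) · (max(0, (1 − x) − D))² ). -/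
/-!
On `[x₀, 1]` the function `f = log |Q|` is a sum of terms `log |u - rᵢ|`, all concave, and the
`g` terms with `|rᵢ| ≤ R` satisfy `|u - rᵢ| ≤ 1 + R`, so they are `(1 + R)⁻²`-strongly concave.
Hence `f v ≤ f u + f'(u) (v - u) - (c/2) (v - u)²`. Take `m ∈ [x, 1]` where the linear term
points inwards (an endpoint, or a zero of `f'` by the intermediate value theorem). Then
`f ≤ f m - (c/2) (· - m)² ≤ -(c/2) (· - m)²` on `[x, 1]`. At `1` this gives `1 - m ≤ D`, and at
`x` it gives `f x ≤ -(c/2) (m - x)² ≤ -(c/2) (1 - x - D)²`.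
-/

open Real Set Finset

namespace Real

theorem log_le_log_add_inv_mul_sub_sub_sq {p q K : ℝ} (hp : 0 < p) (hq : 0 < q) (hpK : p ≤ K)
    (hqK : q ≤ K) : log q ≤ log p + p⁻¹ * (q - p) - (q - p) ^ 2 / (2 * K ^ 2) := by
  set F : ℝ → ℝ := fun s => log s - p⁻¹ * (s - p) + (s - p) ^ 2 / (2 * K ^ 2)
  have hK : 0 < K := hp.trans_le hpK
  -- `F' s = (s - p) (1/K² - 1/(s p))` changes sign from `+` to `-` at `s = p`, as `s p ≤ K²`.
  set F' : ℝ → ℝ := fun s => (s - p) * (1 / K ^ 2 - 1 / (s * p))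
  have hF' : ∀ s, 0 < s → HasDerivAt F (F' s) s := by
    intro s hs
    refine (((hasDerivAt_log hs.ne').sub (((hasDerivAt_id s).sub_const p).const_mul p⁻¹)).add
      ((((hasDerivAt_id s).sub_const p).pow 2).div_const (2 * K ^ 2))).congr_deriv ?_
    simp only [F', id, mul_one]
    field_simp
    ring
  have hFcont : ∀ s t, 0 < s → ContinuousOn F (Icc s t) := fun s t hs u hu =>
    (hF' u (hs.trans_le hu.1)).continuousAt.continuousWithinAt
  have hcurv : ∀ s, 0 < s → s ≤ K → 1 / K ^ 2 - 1 / (s * p) ≤ 0 := fun s hs hsK =>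
    sub_nonpos.2 (one_div_le_one_div_of_le (by positivity) (sq K ▸ mul_le_mul hsK hpK hp.le hK.le))
  suffices F q ≤ F p by norm_num [F] at this; linarith
  rcases le_total q p with hqp | hpq
  · refine monotoneOn_of_hasDerivWithinAt_nonneg (f' := F') (convex_Icc q p) (hFcont q p hq)
      (fun s hs => ?_) (fun s hs => ?_) (left_mem_Icc.2 hqp) (right_mem_Icc.2 hqp) hqp
    all_goals rw [interior_Icc] at hs
    · exact (hF' s (hq.trans hs.1)).hasDerivWithinAt
    · exact mul_nonneg_of_nonpos_of_nonpos (by linarith [hs.2])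
        (hcurv s (hq.trans hs.1) (by linarith [hs.2]))
  · refine antitoneOn_of_hasDerivWithinAt_nonpos (f' := F') (convex_Icc p q) (hFcont p q hp)
      (fun s hs => ?_) (fun s hs => ?_) (left_mem_Icc.2 hpq) (right_mem_Icc.2 hpq) hpq
    all_goals rw [interior_Icc] at hs
    · exact (hF' s (hp.trans hs.1)).hasDerivWithinAt
    · exact mul_nonpos_of_nonneg_of_nonpos (by linarith [hs.1])
        (hcurv s (hp.trans hs.1) (by linarith [hs.2]))

theorem log_le_log_add_inv_mul_sub_of_mul_pos {y z : ℝ} (hyz : 0 < y * z) :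
    log z ≤ log y + y⁻¹ * (z - y) := by
  have h := log_le_sub_one_of_pos
    (div_pos_iff.2 ((pos_and_pos_or_neg_and_neg_of_mul_pos hyz).imp And.symm And.symm))
  have hy : y ≠ 0 := left_ne_zero_of_mul hyz.ne'
  rw [log_div (right_ne_zero_of_mul hyz.ne') hy] at h
  have : z / y - 1 = y⁻¹ * (z - y) := by field_simp
  linarith

theorem log_le_log_add_inv_mul_sub_sub_sq_of_mul_pos {y z K : ℝ} (hyz : 0 < y * z)
    (hyK : |y| ≤ K) (hzK : |z| ≤ K) :
    log z ≤ log y + y⁻¹ * (z - y) - (z - y) ^ 2 / (2 * K ^ 2) := by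
  rcases pos_and_pos_or_neg_and_neg_of_mul_pos hyz with ⟨hy, hz⟩ | ⟨hy, hz⟩
  · rw [abs_of_pos hy] at hyK
    rw [abs_of_pos hz] at hzK
    exact log_le_log_add_inv_mul_sub_sub_sq hy hz hyK hzK
  · rw [abs_of_neg hy] at hyK
    rw [abs_of_neg hz] at hzK
    have := log_le_log_add_inv_mul_sub_sub_sq (neg_pos.2 hy) (neg_pos.2 hz) hyK hzK
    rw [log_neg_eq_log, log_neg_eq_log] at this
    convert this using 2 <;> ring

-- `Real.log` is even (`log x = log |x|`), so this bounds `log |a ∏ (· - rᵢ)|`.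
theorem log_mul_prod_sub_le {ι : Type*} [Fintype ι] (a : ℝ) (r : ι → ℝ) (S : Finset ι)
    {u v K : ℝ} (ha : a ≠ 0) (hsign : ∀ i, 0 < (u - r i) * (v - r i))
    (hS : ∀ i ∈ S, |u - r i| ≤ K ∧ |v - r i| ≤ K) :
    log (a * ∏ i, (v - r i)) ≤ log (a * ∏ i, (u - r i)) + (∑ i, (u - r i)⁻¹) * (v - u)
      - #S * ((v - u) ^ 2 / (2 * K ^ 2)) := by
  classical
  have hu i : u - r i ≠ 0 := left_ne_zero_of_mul (hsign i).ne'
  have hv i : v - r i ≠ 0 := right_ne_zero_of_mul (hsign i).ne'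
  have hroot i : log (v - r i) ≤ log (u - r i) + (u - r i)⁻¹ * (v - u)
      - if i ∈ S then (v - u) ^ 2 / (2 * K ^ 2) else 0 := by
    have hvu : v - r i - (u - r i) = v - u := by ring
    split_ifs with hi
    · simpa only [hvu] using
        log_le_log_add_inv_mul_sub_sub_sq_of_mul_pos (hsign i) (hS i hi).1 (hS i hi).2
    · simpa only [hvu, sub_zero] using log_le_log_add_inv_mul_sub_of_mul_pos (hsign i)
  rw [log_mul ha (prod_ne_zero_iff.2 fun i _ => hv i),
    log_mul ha (prod_ne_zero_iff.2 fun i _ => hu i), log_prod fun i _ => hv i,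
    log_prod fun i _ => hu i]
  calc _ ≤ log a + ∑ i, (log (u - r i) + (u - r i)⁻¹ * (v - u)
        - if i ∈ S then (v - u) ^ 2 / (2 * K ^ 2) else 0) := by
        gcongr with i; exact hroot i
    _ = _ := by
      rw [sum_sub_distrib, sum_add_distrib, ← sum_mul, sum_ite_mem, Finset.univ_inter, sum_const,
        nsmul_eq_mul]
      ring

theorem log_mul_prod_sub_le_of_card_le {ι : Type*} [Fintype ι] (a : ℝ) (r : ι → ℝ)
    {R u v : ℝ} {g : ℕ} (ha : a ≠ 0) (hsign : ∀ i, 0 < (u - r i) * (v - r i)) (hu : |u| ≤ 1)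
    (hv : |v| ≤ 1) (hroots : g ≤ #{i | |r i| ≤ R}) :
    log (a * ∏ i, (v - r i)) ≤ log (a * ∏ i, (u - r i)) + (∑ i, (u - r i)⁻¹) * (v - u)
      - g / (1 + R) ^ 2 / 2 * (v - u) ^ 2 := by
  have hK {w : ℝ} (hw : |w| ≤ 1) i (hi : i ∈ ({i | |r i| ≤ R} : Finset ι)) : |w - r i| ≤ 1 + R :=
    (abs_sub _ _).trans (add_le_add hw (mem_filter.1 hi).2)
  refine (log_mul_prod_sub_le a r _ ha hsign fun i hi => ⟨hK hu i hi, hK hv i hi⟩).trans ?_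
  rw [show (g : ℝ) / (1 + R) ^ 2 / 2 * (v - u) ^ 2 = g * ((v - u) ^ 2 / (2 * (1 + R) ^ 2)) by
    field_simp]
  gcongr

end Real

theorem sub_mul_sub_pos_of_notMem_Icc {a b r u v : ℝ} (hr : r ∉ Icc a b) (hu : u ∈ Icc a b)
    (hv : v ∈ Icc a b) : 0 < (u - r) * (v - r) := by
  simp only [Set.mem_Icc, not_and_or, not_le] at hr
  rcases hr with h | h
  · exact mul_pos (by linarith [hu.1]) (by linarith [hv.1])
  · exact mul_pos_of_neg_of_neg (by linarith [hu.2]) (by linarith [hv.2])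

theorem exists_mem_Icc_forall_mul_sub_nonpos {T : ℝ → ℝ} {a b : ℝ} (hab : a ≤ b)
    (hT : ContinuousOn T (Icc a b)) : ∃ m ∈ Icc a b, ∀ v ∈ Icc a b, T m * (v - m) ≤ 0 := by
  rcases le_or_gt 0 (T b) with hb | hb
  · exact ⟨b, right_mem_Icc.2 hab, fun v hv =>
      mul_nonpos_of_nonneg_of_nonpos hb (sub_nonpos.2 hv.2)⟩
  rcases le_or_gt (T a) 0 with ha | ha
  · exact ⟨a, left_mem_Icc.2 hab, fun v hv =>
      mul_nonpos_of_nonpos_of_nonneg ha (sub_nonneg.2 hv.1)⟩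
  obtain ⟨m, hm, hTm⟩ := intermediate_value_Icc' hab hT ⟨hb.le, ha.le⟩
  exact ⟨m, hm, fun v _ => by simp [hTm]⟩

theorem le_neg_mul_max_sub_sq_of_tangent_le {f T : ℝ → ℝ} {a b c D : ℝ} (hab : a ≤ b)
    (hc : 0 < c) (hD : 0 ≤ D) (hT : ContinuousOn T (Icc a b)) (hf0 : ∀ u ∈ Icc a b, f u ≤ 0)
    (hfb : -(c / 2) * D ^ 2 ≤ f b)
    (hf : ∀ u ∈ Icc a b, ∀ v ∈ Icc a b, f v ≤ f u + T u * (v - u) - c / 2 * (v - u) ^ 2) :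
    f a ≤ -(c / 2) * max 0 (b - a - D) ^ 2 := by
  obtain ⟨m, hm, hTm⟩ := exists_mem_Icc_forall_mul_sub_nonpos hab hT
  have hmax : ∀ v ∈ Icc a b, f v ≤ -(c / 2) * (v - m) ^ 2 := fun v hv => by
    linarith [hf m hm v hv, hTm v hv, hf0 m hm]
  have hbm : b - m ≤ D := by
    have : (b - m) ^ 2 ≤ D ^ 2 := by nlinarith [hmax b (right_mem_Icc.2 hab)]
    exact (pow_le_pow_iff_left₀ (by linarith [hm.2]) hD two_ne_zero).1 this
  calc f a ≤ -(c / 2) * (a - m) ^ 2 := hmax a (left_mem_Icc.2 hab)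
    _ ≤ -(c / 2) * max 0 (b - a - D) ^ 2 := by
      rw [neg_mul, neg_mul, neg_le_neg_iff, ← neg_sub m a, neg_sq]
      gcongr
      exact max_le (by linarith [hm.1]) (by linarith)

theorem bounded_real_rooted_poly_decay (M : ℕ) (a : ℝ) (ha : a ≠ 0) (r : Fin M → ℝ)
    (R : ℝ) (hR : 0 ≤ R) (g : ℕ) (hg : 1 ≤ g) (x₀ : ℝ) (hx₀ : x₀ ∈ Set.Ico (0 : ℝ) 1)
    (Q : ℝ → ℝ) (hQ : ∀ x, Q x = a * ∏ i, (x - r i))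
    (hroots : g ≤ (Finset.univ.filter fun i => |r i| ≤ R).card)
    (hnoroots : ∀ i, r i ∉ Set.Icc x₀ 1)
    (hbound : ∀ t ∈ Set.Icc x₀ 1, |Q t| ≤ 1)
    (c D : ℝ) (hc : c = (g : ℝ) / (1 + R) ^ 2)
    (hD : D = Real.sqrt ((2 / c) * Real.log (1 / |Q 1|)))
    (x : ℝ) (hx : x ∈ Set.Icc x₀ 1) :
    |Q x| ≤ Real.exp (-(c / 2) * (max 0 ((1 - x) - D)) ^ 2) := by
  have hsign {u v} (hu : u ∈ Icc x₀ 1) (hv : v ∈ Icc x₀ 1) i : 0 < (u - r i) * (v - r i) :=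
    sub_mul_sub_pos_of_notMem_Icc (hnoroots i) hu hv
  have hQ0 {u} (hu : u ∈ Icc x₀ 1) : Q u ≠ 0 := by
    rw [hQ]
    exact mul_ne_zero ha (prod_ne_zero_iff.2 fun i _ => left_ne_zero_of_mul (hsign hu hu i).ne')
  have hc0 : 0 < c := hc ▸ div_pos (by exact_mod_cast hg) (by positivity)
  have hx1 : (1 : ℝ) ∈ Icc x₀ 1 := ⟨hx.1.trans hx.2, le_rfl⟩
  have hQ1 : -(c / 2) * D ^ 2 = log (Q 1) := by
    have : 0 ≤ log (1 / |Q 1|) := log_nonneg (one_le_one_div (abs_pos.2 (hQ0 hx1)) (hbound 1 hx1))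
    rw [hD, sq_sqrt (by positivity), one_div, log_inv, log_abs]
    field_simp
  have hsub : Icc x 1 ⊆ Icc x₀ 1 := Icc_subset_Icc_left hx.1
  have habs {u} (hu : u ∈ Icc x 1) : |u| ≤ 1 := abs_le.2 ⟨by linarith [hx₀.1, hx.1, hu.1], hu.2⟩
  have hlog := le_neg_mul_max_sub_sq_of_tangent_le (f := fun u => log (Q u))
    (T := fun u => ∑ i, (u - r i)⁻¹) hx.2 hc0 (hD ▸ sqrt_nonneg _)
    (continuousOn_finsetSum _ fun i _ => (continuousOn_id.sub continuousOn_const).inv₀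
      fun u hu => left_ne_zero_of_mul (hsign (hsub hu) (hsub hu) i).ne')
    (fun u hu => log_abs (Q u) ▸ log_nonpos (abs_nonneg _) (hbound u (hsub hu))) hQ1.le
    (fun u hu v hv => by
      simpa only [hQ, hc] using log_mul_prod_sub_le_of_card_le a r ha
        (hsign (hsub hu) (hsub hv)) (habs hu) (habs hv) hroots)
  rw [← exp_log (abs_pos.2 (hQ0 hx)), log_abs]
  exact exp_le_exp.2 hlog
end

section
/- Let N = m·L with m, L ≥ 1, let V = {0,…,N−1}² be the N×N grid, let E be the set of nearest-neighbor pairs of V (unordered pairs at ℓ₁-distance 1), let J : E → ℝ satisfy |J_e| ≤ J_max for all e ∈ E, and let b : V → ℝ. Define H(s) = ∑_{{u,v}∈E} J_{uv}·s(u)·s(v) + ∑_{v∈V} b(v)·s(v) for s : V → {−1, +1}, and let E₀ = min_s H(s). Partition V into the m² blocks B_{t,u} = {tL,…,(t+1)L−1} × {uL,…,(u+1)L−1}, let H′ be obtained from H by deleting every edge whose two endpoints lie in different blocks, and let E₀′ = min_s H′(s). Then |E₀ − E₀′| ≤ 4·J_max·N²/L. -/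
/-!
Both energies contain the same field term, so `H s - H' s` is half the sum of `J u v s(u) s(v)`
over the ordered nearest-neighbour pairs `(u, v)` that lie in different blocks. Such a pair crosses
one of the `m - 1` block boundaries in one coordinate while sharing the other coordinate, so there
are at most `4 N m = 4 N² / L` of them, and each term is at most `J_max` in absolute value.
The pointwise bound `|H s - H' s| ≤ 4 J_max N² / L` then passes to the minima.
-/

open Finset

theorem abs_ciInf_sub_ciInf_le {ι : Type*} [Finite ι] [Nonempty ι] (f g : ι → ℝ) (c : ℝ)
    (h : ∀ i, |f i - g i| ≤ c) : |(⨅ i, f i) - ⨅ i, g i| ≤ c := by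
  have key : ∀ f g : ι → ℝ, (∀ i, f i ≤ g i + c) → (⨅ i, f i) - ⨅ i, g i ≤ c := by
    intro f g hfg
    rw [sub_le_comm]
    exact le_ciInf fun i => sub_le_iff_le_add.2 <|
      (ciInf_le (Set.finite_range f).bddBelow i).trans (hfg i)
  refine abs_sub_le_iff.2 ⟨key f g fun i => ?_, key g f fun i => ?_⟩
  · linarith [(abs_le.1 (h i)).2]
  · linarith [(abs_le.1 (h i)).1]

theorem abs_sum_sum_mul_mul_le {V : Type*} [Fintype V] (K : V → V → ℝ) (x : V → ℝ)
    (C : Finset (V × V)) (c : ℝ) (hC : ∀ u v, K u v ≠ 0 → (u, v) ∈ C)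
    (hK : ∀ p ∈ C, |K p.1 p.2| ≤ c) (hx : ∀ v, |x v| ≤ 1) :
    |∑ u, ∑ v, K u v * x u * x v| ≤ #C * c := by
  have hsupp : ∀ p ∉ C, K p.1 p.2 * x p.1 * x p.2 = 0 := fun p hp => by
    rw [not_imp_comm.1 (hC p.1 p.2) hp, zero_mul, zero_mul]
  rw [← Fintype.sum_prod_type' (fun u v => K u v * x u * x v),
    ← sum_subset (subset_univ C) fun p _ hp => hsupp p hp]
  calc |∑ p ∈ C, K p.1 p.2 * x p.1 * x p.2|
      ≤ ∑ p ∈ C, |K p.1 p.2 * x p.1 * x p.2| := abs_sum_le_sum_abs _ _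
    _ ≤ ∑ _p ∈ C, c := sum_le_sum fun p hp => by
        have hc : 0 ≤ c := (abs_nonneg _).trans (hK p hp)
        calc |K p.1 p.2 * x p.1 * x p.2| = |K p.1 p.2| * |x p.1| * |x p.2| := by
              rw [abs_mul, abs_mul]
          _ ≤ c * 1 * 1 := by gcongr; exacts [hK p hp, hx _, hx _]
          _ = c := by ring
    _ = #C * c := by rw [sum_const, nsmul_eq_mul]

theorem dvd_max_of_div_ne {L a b : ℕ} (hadj : a + 1 = b ∨ b + 1 = a) (hne : a / L ≠ b / L) :
    L ∣ max a b := by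
  rcases hadj with rfl | rfl
  · rw [max_eq_right (Nat.le_succ a)]
    exact not_not.1 fun hd => hne (Nat.succ_div_of_not_dvd hd).symm
  · rw [max_eq_left (Nat.le_succ b)]
    exact not_not.1 fun hd => hne (Nat.succ_div_of_not_dvd hd)

def crossingPairs (N L : ℕ) : Finset (Fin N × Fin N) :=
  {p | (p.1.val + 1 = p.2.val ∨ p.2.val + 1 = p.1.val) ∧ p.1.val / L ≠ p.2.val / L}

theorem card_crossingPairs_le {N m L : ℕ} (hN : N ≤ m * L) : #(crossingPairs N L) ≤ 2 * m := by
  -- the larger point of a crossing pair is a multiple of `L`, so its block index determines it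
  let g : Fin N × Fin N → Bool × ℕ := fun p => (decide (p.1 < p.2), max p.1.val p.2.val / L)
  have hmaps : Set.MapsTo g (crossingPairs N L) (univ ×ˢ range m : Finset (Bool × ℕ)) :=
    fun p _ => by
      have := p.1.isLt
      have := p.2.isLt
      have hlt : max p.1.val p.2.val < L * m := by rw [Nat.mul_comm]; omega
      exact mem_product.2 ⟨mem_univ _, mem_range.2 (Nat.div_lt_of_lt_mul hlt)⟩
  have hinj : Set.InjOn g (crossingPairs N L) := by
    intro p hp q hq hpq
    simp only [crossingPairs, coe_filter, mem_univ, true_and, Set.mem_ofPred_eq] at hp hq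
    simp only [g, Prod.mk.injEq, decide_eq_decide, Fin.lt_def] at hpq
    have hmax : max p.1.val p.2.val = max q.1.val q.2.val := by
      rw [← Nat.div_mul_cancel (dvd_max_of_div_ne hp.1 hp.2),
        ← Nat.div_mul_cancel (dvd_max_of_div_ne hq.1 hq.2), hpq.2]
    ext <;> omega
  simpa using card_le_card_of_injOn g hmaps hinj

def gridCrossingPairs (N L : ℕ) : Finset ((Fin N × Fin N) × (Fin N × Fin N)) :=
  {p | |(p.1.1.val : ℤ) - p.2.1.val| + |(p.1.2.val : ℤ) - p.2.2.val| = 1 ∧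
    ¬(p.1.1.val / L = p.2.1.val / L ∧ p.1.2.val / L = p.2.2.val / L)}

theorem gridCrossingPairs_subset (N L : ℕ) :
    gridCrossingPairs N L ⊆
      (univ ×ˢ crossingPairs N L).image (fun q => ((q.1, q.2.1), (q.1, q.2.2))) ∪
      (crossingPairs N L ×ˢ univ).image (fun q => ((q.1.1, q.2), (q.1.2, q.2))) := by
  rintro ⟨⟨a, b⟩, ⟨c, d⟩⟩ hp
  simp only [gridCrossingPairs, mem_filter, mem_univ, true_and] at hp
  obtain ⟨hadj, hcross⟩ := hp
  rw [abs_eq_max_neg, abs_eq_max_neg] at hadj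
  simp only [mem_union, mem_image, mem_product, mem_univ, crossingPairs, mem_filter, true_and,
    Prod.exists, Prod.mk.injEq]
  by_cases hac : a = c
  · subst hac
    exact Or.inl ⟨a, b, d, ⟨by omega, fun h => hcross ⟨rfl, h⟩⟩, ⟨rfl, rfl⟩, rfl, rfl⟩
  · have hbd : b = d := Fin.ext (by omega)
    subst hbd
    exact Or.inr ⟨a, c, b, ⟨⟨by omega, fun h => hcross ⟨h, rfl⟩⟩, trivial⟩, ⟨rfl, rfl⟩, rfl, rfl⟩

theorem card_gridCrossingPairs_le {N m L : ℕ} (hN : N ≤ m * L) :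
    #(gridCrossingPairs N L) ≤ 4 * N * m := by
  have hC := card_crossingPairs_le hN
  calc #(gridCrossingPairs N L)
      ≤ #(univ ×ˢ crossingPairs N L) + #(crossingPairs N L ×ˢ univ) :=
        (card_le_card (gridCrossingPairs_subset N L)).trans <|
          (card_union_le _ _).trans (add_le_add card_image_le card_image_le)
    _ ≤ 4 * N * m := by
        simp only [card_product, card_univ, Fintype.card_fin]
        nlinarith

theorem abs_energy_sub_blockEnergy_le {N m L : ℕ} (hN : N ≤ m * L)
    (J : (Fin N × Fin N) → (Fin N × Fin N) → ℝ)
    (hnn : ∀ u v, J u v ≠ 0 → |(u.1.val : ℤ) - v.1.val| + |(u.2.val : ℤ) - v.2.val| = 1)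
    {Jmax : ℝ} (hJmax0 : 0 ≤ Jmax) (hJmax : ∀ u v, |J u v| ≤ Jmax)
    (x : Fin N × Fin N → ℝ) (hx : ∀ v, |x v| ≤ 1) :
    |∑ u, ∑ v, J u v * x u * x v -
      ∑ u, ∑ v, (if u.1.val / L = v.1.val / L ∧ u.2.val / L = v.2.val / L then J u v else 0)
        * x u * x v| ≤ 4 * N * m * Jmax := by
  let K u v := if u.1.val / L = v.1.val / L ∧ u.2.val / L = v.2.val / L then 0 else J u v
  have hdiff : ∑ u, ∑ v, J u v * x u * x v -
      ∑ u, ∑ v, (if u.1.val / L = v.1.val / L ∧ u.2.val / L = v.2.val / L then J u v else 0)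
        * x u * x v = ∑ u, ∑ v, K u v * x u * x v := by
    rw [← sum_sub_distrib]
    refine sum_congr rfl fun u _ => ?_
    rw [← sum_sub_distrib]
    refine sum_congr rfl fun v _ => ?_
    split_ifs <;> simp [K, *]
  have hsupp : ∀ u v, K u v ≠ 0 → (u, v) ∈ gridCrossingPairs N L := fun u v hK => by
    by_cases hsame : u.1.val / L = v.1.val / L ∧ u.2.val / L = v.2.val / L
    · simp [K, hsame] at hK
    · simp only [K, if_neg hsame] at hK
      simp only [gridCrossingPairs, mem_filter, mem_univ, true_and]
      exact ⟨hnn u v hK, hsame⟩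
  have hK : ∀ p ∈ gridCrossingPairs N L, |K p.1 p.2| ≤ Jmax := fun p _ => by
    simp only [K]
    split_ifs <;> simp [hJmax0, hJmax]
  have hcard : (#(gridCrossingPairs N L) : ℝ) ≤ 4 * N * m := by
    exact_mod_cast card_gridCrossingPairs_le hN
  rw [hdiff]
  exact (abs_sum_sum_mul_mul_le K x _ Jmax hsupp hK hx).trans
    (mul_le_mul_of_nonneg_right hcard hJmax0)

theorem ising_block_decomposition_nearest_neighbor_general
    (m L : ℕ) (hm : 1 ≤ m) (hL : 1 ≤ L) (N : ℕ) (hN : N = m * L)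
    (J : (Fin N × Fin N) → (Fin N × Fin N) → ℝ)
    (hnn : ∀ u v, J u v ≠ 0 →
      |(u.1.val : ℤ) - v.1.val| + |(u.2.val : ℤ) - v.2.val| = 1)
    (Jmax : ℝ) (hJmax : ∀ u v, |J u v| ≤ Jmax)
    (b : Fin N × Fin N → ℝ)
    (σ : Bool → ℝ) (hσ : σ = fun s => if s then 1 else -1)
    (H H' : ((Fin N × Fin N) → Bool) → ℝ)
    (hH : ∀ s, H s =
      (1/2) * ∑ u, ∑ v, J u v * σ (s u) * σ (s v) + ∑ v, b v * σ (s v))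
    (hH' : ∀ s, H' s =
      (1/2) * ∑ u, ∑ v,
        (if u.1.val / L = v.1.val / L ∧ u.2.val / L = v.2.val / L then J u v else 0)
          * σ (s u) * σ (s v) + ∑ v, b v * σ (s v))
    (E₀ E₀' : ℝ) (hE₀ : E₀ = ⨅ s, H s) (hE₀' : E₀' = ⨅ s, H' s) :
    |E₀ - E₀'| ≤ 4 * Jmax * (N : ℝ) ^ 2 / L := by
  have hN0 : 0 < N := hN ▸ Nat.mul_pos hm hL
  have hJmax0 : 0 ≤ Jmax := (abs_nonneg _).trans (hJmax ⟨⟨0, hN0⟩, ⟨0, hN0⟩⟩ ⟨⟨0, hN0⟩, ⟨0, hN0⟩⟩)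
  have hσ1 : ∀ t, |σ t| ≤ 1 := by subst hσ; intro t; cases t <;> norm_num
  refine hE₀ ▸ hE₀' ▸ abs_ciInf_sub_ciInf_le H H' _ fun s => ?_
  have hblock := abs_energy_sub_blockEnergy_le hN.le J hnn hJmax0 hJmax (fun v => σ (s v))
    fun v => hσ1 (s v)
  calc |H s - H' s|
      = 1 / 2 * |∑ u, ∑ v, J u v * σ (s u) * σ (s v) -
          ∑ u, ∑ v, (if u.1.val / L = v.1.val / L ∧ u.2.val / L = v.2.val / L then J u v else 0)
            * σ (s u) * σ (s v)| := by
        rw [hH, hH', add_sub_add_right_eq_sub, ← mul_sub, abs_mul, abs_of_pos one_half_pos]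
    _ ≤ 4 * N * m * Jmax := (mul_le_of_le_one_left (abs_nonneg _) (by norm_num)).trans hblock
    _ = 4 * Jmax * (N : ℝ) ^ 2 / L := by
        rw [hN]
        push_cast
        field_simp

/-- Block decomposition of the ground energy of a nearest-neighbor Ising model on the
`N × N` grid (`N = m·L`): deleting all edges between different `L × L` blocks changes
the ground energy by at most `4·J_max·N²/L`.

Here vertices are `Fin N × Fin N`, couplings are encoded by a symmetric function
`J : V → V → ℝ` supported on nearest-neighbor pairs (ℓ₁-distance 1), so that
`H(s) = (1/2)·∑_{u,v} J u v · s(u)·s(v) + ∑_v b v · s(v)` sums each unordered edge once.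
Spin configurations are `s : V → Bool` with spin values `σ(s v) ∈ {−1,+1}`, and the
ground energies are the infima over all configurations. -/
theorem ising_block_decomposition_nearest_neighbor
    (m L : ℕ) (hm : 1 ≤ m) (hL : 1 ≤ L) (N : ℕ) (hN : N = m * L)
    (J : (Fin N × Fin N) → (Fin N × Fin N) → ℝ)
    (hsymm : ∀ u v, J u v = J v u)
    (hnn : ∀ u v, J u v ≠ 0 →
      |(u.1.val : ℤ) - v.1.val| + |(u.2.val : ℤ) - v.2.val| = 1)
    (Jmax : ℝ) (hJmax : ∀ u v, |J u v| ≤ Jmax)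
    (b : Fin N × Fin N → ℝ)
    (σ : Bool → ℝ) (hσ : σ = fun s => if s then 1 else -1)
    (H H' : ((Fin N × Fin N) → Bool) → ℝ)
    (hH : ∀ s, H s =
      (1/2) * ∑ u, ∑ v, J u v * σ (s u) * σ (s v) + ∑ v, b v * σ (s v))
    (hH' : ∀ s, H' s =
      (1/2) * ∑ u, ∑ v,
        (if u.1.val / L = v.1.val / L ∧ u.2.val / L = v.2.val / L then J u v else 0)
          * σ (s u) * σ (s v) + ∑ v, b v * σ (s v))
    (E₀ E₀' : ℝ) (hE₀ : E₀ = ⨅ s, H s) (hE₀' : E₀' = ⨅ s, H' s) :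
    |E₀ - E₀'| ≤ 4 * Jmax * (N : ℝ) ^ 2 / L :=
  ising_block_decomposition_nearest_neighbor_general m L hm hL N hN J hnn Jmax hJmax b σ hσ H H' hH
    hH' E₀ E₀' hE₀ hE₀'
end

section
/- Let N = m·L with m, L ≥ 1, let V = {0,…,N−1}² be the N×N grid, and let E be a set of unordered pairs of distinct vertices of V such that every edge {u,v} ∈ E satisfies ℓ₁-distance(u,v) ≤ c and every vertex belongs to at most Δ edges. Let J : E → ℝ satisfy |J_e| ≤ J_max for all e ∈ E, and let b : V → ℝ. Define H(s) = ∑_{{u,v}∈E} J_{uv}·s(u)·s(v) + ∑_{v∈V} b(v)·s(v) for s : V → {−1, +1}, and let E₀ = min_s H(s). Partition V into the m² blocks B_{t,u} = {tL,…,(t+1)L−1} × {uL,…,(u+1)L−1}, let H′ be obtained from H by deleting every edge whose two endpoints lie in different blocks, and let E₀′ = min_s H′(s). Then |E₀ − E₀′| ≤ 8·c·Δ·J_max·N²/L. -/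
open Finset

lemma inf_diff_le {α : Type*} [Fintype α] [Nonempty α] (f g : α → ℝ) (K : ℝ)
    (h : ∀ a, |f a - g a| ≤ K) : |(⨅ a, f a) - (⨅ a, g a)| ≤ K := by
  obtain ⟨a₀, -, ha₀⟩ := Finset.exists_min_image Finset.univ f ⟨Classical.arbitrary α, Finset.mem_univ _⟩
  obtain ⟨b₀, -, hb₀⟩ := Finset.exists_min_image Finset.univ g ⟨Classical.arbitrary α, Finset.mem_univ _⟩
  have hf : (⨅ a, f a) = f a₀ := by
    refine le_antisymm (ciInf_le ⟨f a₀, ?_⟩ a₀) (le_ciInf fun a => ha₀ a (Finset.mem_univ a))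
    rintro x ⟨a, rfl⟩; exact ha₀ a (Finset.mem_univ a)
  have hg : (⨅ a, g a) = g b₀ := by
    refine le_antisymm (ciInf_le ⟨g b₀, ?_⟩ b₀) (le_ciInf fun a => hb₀ a (Finset.mem_univ a))
    rintro x ⟨a, rfl⟩; exact hb₀ a (Finset.mem_univ a)
  rw [hf, hg, abs_sub_le_iff]
  constructor
  · calc f a₀ - g b₀ ≤ f b₀ - g b₀ := by linarith [ha₀ b₀ (Finset.mem_univ b₀)]
      _ ≤ |f b₀ - g b₀| := le_abs_self _
      _ ≤ K := h b₀
  · calc g b₀ - f a₀ ≤ g a₀ - f a₀ := by linarith [hb₀ a₀ (Finset.mem_univ a₀)]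
      _ ≤ |f a₀ - g a₀| := by rw [abs_sub_comm]; exact le_abs_self _
      _ ≤ K := h a₀

lemma near_boundary {L c a b : ℕ} (hL : 1 ≤ L) (hdiv : a / L ≠ b / L)
    (hd : |(a:ℤ) - b| ≤ c) : a % L < c ∨ L - c ≤ a % L := by
  have hd' := abs_le.mp hd
  have hab : a ≠ b := fun h => hdiv (by rw [h])
  have hda := Nat.div_add_mod a L
  have hma : a % L < L := Nat.mod_lt _ hL
  rcases Nat.lt_or_ge a b with h | h
  · have h1 : a / L < b / L := lt_of_le_of_ne (Nat.div_le_div_right h.le) hdiv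
    have h2 : (a / L + 1) * L ≤ (b / L) * L := Nat.mul_le_mul_right L h1
    have h3 : (b / L) * L ≤ b := Nat.div_mul_le_self b L
    have e2 : (a / L + 1) * L = L * (a / L) + L := by ring
    have e3 : (b / L) * L = L * (b / L) := by ring
    have h4 := Nat.div_add_mod b L
    omega
  · have hba : b < a := lt_of_le_of_ne h (Ne.symm hab)
    have h1 : b / L < a / L := lt_of_le_of_ne (Nat.div_le_div_right h) (Ne.symm hdiv)
    have h2 : (b / L + 1) * L ≤ (a / L) * L := Nat.mul_le_mul_right L h1
    have h3 : (b / L) * L ≤ b := Nat.div_mul_le_self b L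
    have e2 : (b / L + 1) * L = L * (b / L) + L := by ring
    have e3 : (a / L) * L = L * (a / L) := by ring
    have h4 := Nat.div_add_mod b L
    have hmb : b % L < L := Nat.mod_lt _ hL
    omega

lemma count_bad {N L c m : ℕ} (hL : 1 ≤ L) (hN : N = m * L) :
    (Finset.univ.filter (fun x : Fin N => x.val % L < c ∨ L - c ≤ x.val % L)).card
      ≤ 2 * c * m := by
  classical
  set badres : Finset ℕ := (Finset.range L).filter (fun r => r < c ∨ L - c ≤ r) with hbr
  have hbadres : badres.card ≤ 2 * c := by
    have hsub : badres ⊆ Finset.range c ∪ Finset.Ico (L - c) L := by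
      intro r hr
      simp only [hbr, Finset.mem_filter, Finset.mem_range] at hr
      rcases hr.2 with h | h
      · exact Finset.mem_union_left _ (Finset.mem_range.mpr h)
      · exact Finset.mem_union_right _ (Finset.mem_Ico.mpr ⟨h, hr.1⟩)
    calc badres.card ≤ (Finset.range c ∪ Finset.Ico (L - c) L).card := Finset.card_le_card hsub
      _ ≤ (Finset.range c).card + (Finset.Ico (L - c) L).card := Finset.card_union_le _ _
      _ = c + (L - (L - c)) := by rw [Finset.card_range, Nat.card_Ico]
      _ ≤ c + c := by omega
      _ = 2 * c := by ring
  have hinj : ∀ x ∈ (Finset.univ.filter (fun x : Fin N => x.val % L < c ∨ L - c ≤ x.val % L)),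
      ((x.val / L, x.val % L) : ℕ × ℕ) ∈ (Finset.range m) ×ˢ badres := by
    intro x hx
    simp only [Finset.mem_filter] at hx
    refine Finset.mem_product.mpr ⟨Finset.mem_range.mpr ?_, ?_⟩
    · exact Nat.div_lt_of_lt_mul (by rw [Nat.mul_comm]; exact hN ▸ x.isLt)
    · simp only [hbr, Finset.mem_filter, Finset.mem_range]
      exact ⟨Nat.mod_lt _ hL, hx.2⟩
  calc (Finset.univ.filter (fun x : Fin N => x.val % L < c ∨ L - c ≤ x.val % L)).card
      ≤ ((Finset.range m) ×ˢ badres).card := by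
        apply Finset.card_le_card_of_injOn _ hinj
        intro x hx y hy hxy
        have h1 : x.val / L = y.val / L := congrArg Prod.fst hxy
        have h2 : x.val % L = y.val % L := congrArg Prod.snd hxy
        refine Fin.ext ?_
        rw [← Nat.div_add_mod x.val L, ← Nat.div_add_mod y.val L, h1, h2]
    _ = m * badres.card := by rw [Finset.card_product, Finset.card_range]
    _ ≤ m * (2 * c) := Nat.mul_le_mul_left m hbadres
    _ = 2 * c * m := by ring



/-- Block decomposition of the ground energy of a bounded-interaction-range,
bounded-degree Ising model on the `N × N` grid (`N = m·L`): if every edge joins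
distinct vertices at ℓ₁-distance at most `c` and every vertex has degree at most `Δ`,
then deleting all edges between different `L × L` blocks changes the ground energy by
at most `8·c·Δ·J_max·N²/L`.

Here vertices are `Fin N × Fin N`, couplings are encoded by a symmetric function
`J : V → V → ℝ` (vanishing on the diagonal, since edges join distinct vertices), so
that `H(s) = (1/2)·∑_{u,v} J u v · s(u)·s(v) + ∑_v b v · s(v)` sums each unordered
edge once. Spin configurations are `s : V → Bool` with spin values `σ(s v) ∈ {−1,+1}`,
and the ground energies are the infima over all configurations. -/
theorem ising_block_decomposition_bounded_range
    (m L : ℕ) (hm : 1 ≤ m) (hL : 1 ≤ L) (N : ℕ) (hN : N = m * L)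
    (c Δ : ℕ)
    (J : (Fin N × Fin N) → (Fin N × Fin N) → ℝ)
    (hsymm : ∀ u v, J u v = J v u)
    (hdiag : ∀ u, J u u = 0)
    (hrange : ∀ u v, J u v ≠ 0 →
      |(u.1.val : ℤ) - v.1.val| + |(u.2.val : ℤ) - v.2.val| ≤ c)
    (hdeg : ∀ u, (Finset.univ.filter fun v => J u v ≠ 0).card ≤ Δ)
    (Jmax : ℝ) (hJmax : ∀ u v, |J u v| ≤ Jmax)
    (b : Fin N × Fin N → ℝ)
    (σ : Bool → ℝ) (hσ : σ = fun s => if s then 1 else -1)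
    (H H' : ((Fin N × Fin N) → Bool) → ℝ)
    (hH : ∀ s, H s =
      (1/2) * ∑ u, ∑ v, J u v * σ (s u) * σ (s v) + ∑ v, b v * σ (s v))
    (hH' : ∀ s, H' s =
      (1/2) * ∑ u, ∑ v,
        (if u.1.val / L = v.1.val / L ∧ u.2.val / L = v.2.val / L then J u v else 0)
          * σ (s u) * σ (s v) + ∑ v, b v * σ (s v))
    (E₀ E₀' : ℝ) (hE₀ : E₀ = ⨅ s, H s) (hE₀' : E₀' = ⨅ s, H' s) :
    |E₀ - E₀'| ≤ 8 * c * Δ * Jmax * (N : ℝ) ^ 2 / L := by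
  classical
  have hN1 : 1 ≤ N := hN ▸ Nat.mul_le_mul hm hL
  haveI : NeZero N := ⟨by omega⟩
  have hL0 : (0:ℝ) < L := by exact_mod_cast hL
  have v0 : Fin N × Fin N := ⟨⟨0, by omega⟩, ⟨0, by omega⟩⟩
  have hJ0 : 0 ≤ Jmax := le_trans (abs_nonneg (J v0 v0)) (hJmax v0 v0)
  have hσ1 : ∀ t, |σ t| = 1 := by intro t; cases t <;> simp [hσ]
  -- the predicates
  set P : (Fin N × Fin N) → (Fin N × Fin N) → Prop := fun u v =>
    u.1.val / L = v.1.val / L ∧ u.2.val / L = v.2.val / L with hPdef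
  set D : (Fin N × Fin N) → (Fin N × Fin N) → ℝ := fun u v =>
    if P u v then 0 else J u v with hDdef
  set Sp : (Fin N × Fin N) → Prop := fun u =>
    (u.1.val % L < c ∨ L - c ≤ u.1.val % L) ∨ (u.2.val % L < c ∨ L - c ≤ u.2.val % L)
    with hSpdef
  have hcross : ∀ u v, ¬ P u v → J u v ≠ 0 → Sp u := by
    intro u v hp hj
    have hr := hrange u v hj
    have h1 : |(u.1.val : ℤ) - v.1.val| ≤ c := by
      have := abs_nonneg ((u.2.val : ℤ) - v.2.val); linarith
    have h2 : |(u.2.val : ℤ) - v.2.val| ≤ c := by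
      have := abs_nonneg ((u.1.val : ℤ) - v.1.val); linarith
    rw [hPdef, not_and_or] at hp
    rcases hp with hp | hp
    · exact Or.inl (near_boundary hL hp h1)
    · exact Or.inr (near_boundary hL hp h2)
  have hrow : ∀ u, (∑ v, |D u v|) ≤ if Sp u then (Δ : ℝ) * Jmax else 0 := by
    intro u
    by_cases hs : Sp u
    · rw [if_pos hs]
      have hDle : ∀ v, |D u v| ≤ Jmax := by
        intro v
        simp only [hDdef]
        by_cases h : P u v
        · rw [if_pos h, abs_zero]; exact hJ0
        · rw [if_neg h]; exact hJmax u v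
      have hzero : ∀ v, J u v = 0 → |D u v| = 0 := by
        intro v h
        simp only [hDdef]
        rw [abs_eq_zero]
        by_cases hp : P u v
        · rw [if_pos hp]
        · rw [if_neg hp]; exact h
      calc (∑ v, |D u v|)
          = ∑ v ∈ Finset.univ.filter (fun v => J u v ≠ 0), |D u v| :=
            (Finset.sum_filter_of_ne (fun v _ h => by
              contrapose! h; exact hzero v h)).symm
        _ ≤ ∑ _v ∈ Finset.univ.filter (fun v => J u v ≠ 0), Jmax :=
            Finset.sum_le_sum fun v _ => hDle v
        _ = ((Finset.univ.filter (fun v => J u v ≠ 0)).card : ℝ) * Jmax := by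
            rw [Finset.sum_const, nsmul_eq_mul]
        _ ≤ (Δ : ℝ) * Jmax := by
            apply mul_le_mul_of_nonneg_right _ hJ0
            exact_mod_cast hdeg u
    · rw [if_neg hs]
      refine le_of_eq (Finset.sum_eq_zero fun v _ => ?_)
      rw [abs_eq_zero]
      simp only [hDdef]
      by_cases hp : P u v
      · rw [if_pos hp]
      · rw [if_neg hp]
        by_contra hj
        exact hs (hcross u v hp hj)
  -- counting
  have hbad1 : (Finset.univ.filter (fun u : Fin N × Fin N =>
      u.1.val % L < c ∨ L - c ≤ u.1.val % L)).card ≤ 2 * c * m * N := by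
    have he : Finset.univ.filter (fun u : Fin N × Fin N =>
        u.1.val % L < c ∨ L - c ≤ u.1.val % L)
        = (Finset.univ.filter (fun x : Fin N => x.val % L < c ∨ L - c ≤ x.val % L)) ×ˢ
          Finset.univ := by
      ext u; simp [Finset.mem_product]
    rw [he, Finset.card_product, Finset.card_univ, Fintype.card_fin]
    exact Nat.mul_le_mul_right N (count_bad hL hN)
  have hbad2 : (Finset.univ.filter (fun u : Fin N × Fin N =>
      u.2.val % L < c ∨ L - c ≤ u.2.val % L)).card ≤ 2 * c * m * N := by
    have he : Finset.univ.filter (fun u : Fin N × Fin N =>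
        u.2.val % L < c ∨ L - c ≤ u.2.val % L)
        = Finset.univ ×ˢ
          (Finset.univ.filter (fun x : Fin N => x.val % L < c ∨ L - c ≤ x.val % L)) := by
      ext u; simp [Finset.mem_product]
    rw [he, Finset.card_product, Finset.card_univ, Fintype.card_fin]
    calc N * (Finset.univ.filter (fun x : Fin N =>
          x.val % L < c ∨ L - c ≤ x.val % L)).card ≤ N * (2 * c * m) :=
          Nat.mul_le_mul_left N (count_bad hL hN)
      _ = 2 * c * m * N := by ring
  have hcardS : (Finset.univ.filter Sp).card ≤ 4 * c * m * N := by
    have hsub : Finset.univ.filter Sp ⊆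
        (Finset.univ.filter (fun u : Fin N × Fin N =>
          u.1.val % L < c ∨ L - c ≤ u.1.val % L)) ∪
        (Finset.univ.filter (fun u : Fin N × Fin N =>
          u.2.val % L < c ∨ L - c ≤ u.2.val % L)) := by
      intro u hu
      simp only [Finset.mem_filter, Finset.mem_univ, true_and, hSpdef] at hu
      rcases hu with h | h
      · exact Finset.mem_union_left _
          (by simp only [Finset.mem_filter, Finset.mem_univ, true_and]; exact h)
      · exact Finset.mem_union_right _
          (by simp only [Finset.mem_filter, Finset.mem_univ, true_and]; exact h)
    calc (Finset.univ.filter Sp).card ≤ _ := Finset.card_le_card hsub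
      _ ≤ _ + _ := Finset.card_union_le _ _
      _ ≤ 2 * c * m * N + 2 * c * m * N := Nat.add_le_add hbad1 hbad2
      _ = 4 * c * m * N := by ring
  -- pointwise bound on |H s - H' s|
  have hpoint : ∀ s, |H s - H' s| ≤ 8 * c * Δ * Jmax * (N : ℝ) ^ 2 / L := by
    intro s
    have e1 : H s - H' s = (1/2) * ∑ u, ∑ v, D u v * σ (s u) * σ (s v) := by
      rw [hH, hH', add_sub_add_right_eq_sub, ← mul_sub, ← Finset.sum_sub_distrib]
      congr 1
      refine Finset.sum_congr rfl fun u _ => ?_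
      rw [← Finset.sum_sub_distrib]
      refine Finset.sum_congr rfl fun v _ => ?_
      simp only [hDdef]
      by_cases h : u.1.val / L = v.1.val / L ∧ u.2.val / L = v.2.val / L
      · rw [if_pos h, if_pos (show P u v from h)]; ring
      · rw [if_neg h, if_neg (show ¬ P u v from h)]; ring
    have habs : ∀ u v, |D u v * σ (s u) * σ (s v)| = |D u v| := by
      intro u v; rw [abs_mul, abs_mul, hσ1, hσ1, mul_one, mul_one]
    have h2 : |∑ u, ∑ v, D u v * σ (s u) * σ (s v)| ≤ ∑ u, ∑ v, |D u v| := by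
      calc |∑ u, ∑ v, D u v * σ (s u) * σ (s v)|
          ≤ ∑ u, |∑ v, D u v * σ (s u) * σ (s v)| := Finset.abs_sum_le_sum_abs _ _
        _ ≤ ∑ u, ∑ v, |D u v * σ (s u) * σ (s v)| :=
            Finset.sum_le_sum fun u _ => Finset.abs_sum_le_sum_abs _ _
        _ = ∑ u, ∑ v, |D u v| := by
            exact Finset.sum_congr rfl fun u _ => Finset.sum_congr rfl fun v _ => habs u v
    have h3 : (∑ u, ∑ v, |D u v|) ≤ ((Finset.univ.filter Sp).card : ℝ) * ((Δ : ℝ) * Jmax) := by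
      calc (∑ u, ∑ v, |D u v|)
          ≤ ∑ u, (if Sp u then (Δ : ℝ) * Jmax else 0) :=
            Finset.sum_le_sum fun u _ => hrow u
        _ = ((Finset.univ.filter Sp).card : ℝ) * ((Δ : ℝ) * Jmax) := by
            rw [Finset.sum_ite, Finset.sum_const, Finset.sum_const_zero, add_zero,
              nsmul_eq_mul]
    have hNr : (N : ℝ) = (m : ℝ) * (L : ℝ) := by rw [hN]; push_cast; ring
    have hNsq : (N : ℝ) ^ 2 / L = (m : ℝ) * N := by
      rw [div_eq_iff hL0.ne', hNr]; ring
    have hcard' : ((Finset.univ.filter Sp).card : ℝ) ≤ 4 * c * m * N := by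
      exact_mod_cast hcardS
    calc |H s - H' s| = (1/2) * |∑ u, ∑ v, D u v * σ (s u) * σ (s v)| := by
          rw [e1, abs_mul, abs_of_pos (by norm_num : (0:ℝ) < 1/2)]
      _ ≤ (1/2) * (((Finset.univ.filter Sp).card : ℝ) * ((Δ : ℝ) * Jmax)) := by
          apply mul_le_mul_of_nonneg_left (le_trans h2 h3) (by norm_num)
      _ ≤ (1/2) * ((4 * c * m * N) * ((Δ : ℝ) * Jmax)) := by
          apply mul_le_mul_of_nonneg_left _ (by norm_num)
          apply mul_le_mul_of_nonneg_right hcard' (by positivity)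
      _ = 2 * c * Δ * Jmax * ((m : ℝ) * N) := by ring
      _ ≤ 8 * c * Δ * Jmax * ((m : ℝ) * N) := by
          have : (0:ℝ) ≤ (c : ℝ) * Δ * Jmax * ((m : ℝ) * N) := by positivity
          nlinarith
      _ = 8 * c * Δ * Jmax * (N : ℝ) ^ 2 / L := by rw [mul_div_assoc, hNsq]
  rw [hE₀, hE₀']
  exact inf_diff_le H H' _ hpoint
end
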